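/- arXiv:2308.03967 — 7 statements merged into one kernel-verified Lean document; each statement's English description precedes it below -/
import Mathlib

section
/- Let F be a field, let n be a positive integer, and let M be an n×n matrix over F such that (1) every diagonal entry M(i,i) is nonzero, and (2) for every index i, either all entries above the diagonal entry in its column are zero (M(j,i) = 0 for all j < i) or all entries to the left of the diagonal entry in its row are zero (M(i,j) = 0 for all j < i). Then M has full rank, i.e., rank(M) = n. -/
private lemma stmt_0_det {F : Type*} [Field F] : ∀ (n : ℕ)
    (M : Matrix (Fin n) (Fin n) F)
    (_ : ∀ i : Fin n, M i i ≠ 0)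
    (_ : ∀ i : Fin n, (∀ j : Fin n, j < i → M j i = 0) ∨
      (∀ j : Fin n, j < i → M i j = 0)),
    M.det ≠ 0 := by
  intro n
  induction n with
  | zero => intro M _ _; simp [Matrix.det_fin_zero]
  | succ m ih =>
    intro M hdiag hzero
    have hminor : (M.submatrix Fin.castSucc Fin.castSucc).det ≠ 0 := by
      apply ih
      · intro i; exact hdiag i.castSucc
      · intro i
        rcases hzero i.castSucc with h | h
        · left; intro j hj
          exact h j.castSucc (by simpa using hj)
        · right; intro j hj
          exact h j.castSucc (by simpa using hj)
    have hlt : ∀ i : Fin (m+1), i ≠ Fin.last m → i < Fin.last m := by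
      intro i hi
      exact lt_of_le_of_ne (Fin.le_last i) hi
    rcases hzero (Fin.last m) with h | h
    · rw [Matrix.det_succ_column M (Fin.last m)]
      rw [Finset.sum_eq_single (Fin.last m)]
      · rw [Fin.succAbove_last]
        exact mul_ne_zero (mul_ne_zero (pow_ne_zero _ (neg_ne_zero.mpr one_ne_zero))
          (hdiag _)) hminor
      · intro i _ hi
        rw [h i (hlt i hi)]; ring
      · intro hmem; exact absurd (Finset.mem_univ _) hmem
    · rw [Matrix.det_succ_row M (Fin.last m)]
      rw [Finset.sum_eq_single (Fin.last m)]
      · rw [Fin.succAbove_last]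
        exact mul_ne_zero (mul_ne_zero (pow_ne_zero _ (neg_ne_zero.mpr one_ne_zero))
          (hdiag _)) hminor
      · intro j _ hj
        rw [h j (hlt j hj)]; ring
      · intro hmem; exact absurd (Finset.mem_univ _) hmem

/-- Let `F` be a field, `n` a positive integer, and `M` an `n × n`
matrix over `F` such that every diagonal entry is nonzero and, for every index `i`,
either all entries above the diagonal entry in its column are zero or all entries to
the left of the diagonal entry in its row are zero.  Then `M` has full rank. -/
theorem stmt_0 {F : Type*} [Field F] (n : ℕ) (hn : 0 < n)
    (M : Matrix (Fin n) (Fin n) F)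
    (hdiag : ∀ i : Fin n, M i i ≠ 0)
    (hzero : ∀ i : Fin n, (∀ j : Fin n, j < i → M j i = 0) ∨
      (∀ j : Fin n, j < i → M i j = 0)) :
    M.rank = n := by
  have hdet := stmt_0_det n M hdiag hzero
  have : IsUnit M := (Matrix.isUnit_iff_isUnit_det M).mpr (isUnit_iff_ne_zero.mpr hdet)
  simpa using Matrix.rank_of_isUnit M this
end

section
/- Let T be a finite tree with at least one edge in which every vertex has degree at most 3, and let n be the number of leaves (degree-1 vertices) of T. Then there exists an edge e of T such that each of the two connected components of T with e removed contains at least n/3 leaves of T. -/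
/-!
Write `side a b` for the vertices of the component of `a` in `T - ab`. Among the oriented edges
`uv` whose side `side u v` holds at least `n / 3` leaves, take one for which `side u v` has the
fewest vertices. If `side v u` held fewer than `n / 3` leaves, `side u v` would hold more than
`2n / 3`. Apart from `u` itself, these leaves are covered by the sides `side x u` for the at most
two neighbours `x ≠ v` of `u`; those sides are strictly smaller than `side u v`, so each holds
fewer than `n / 3` leaves, a contradiction. If `u` is a leaf then `side u v = {u}`, which is
excluded since a tree with an edge has at least two leaves.
-/

namespace SimpleGraph

variable {V : Type*} {G : SimpleGraph V}

def leaves (G : SimpleGraph V) : Set V := {v | (G.neighborSet v).ncard = 1}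

def side (G : SimpleGraph V) (a b : V) : Set V := {w | (G.deleteEdges {s(a, b)}).Reachable a w}

theorem Walk.reachable_deleteEdges_or {a w : V} (p : G.Walk w a) (b : V) :
    (G.deleteEdges {s(a, b)}).Reachable w a ∨ (G.deleteEdges {s(a, b)}).Reachable w b := by
  induction p with
  | nil => exact .inl .rfl
  | @cons w y a hwy p ih =>
    by_cases he : s(w, y) = s(a, b)
    · rcases Sym2.eq_iff.mp he with ⟨rfl, -⟩ | ⟨rfl, -⟩
      · exact .inl .rfl
      · exact .inr .rfl
    · have hadj : (G.deleteEdges {s(a, b)}).Adj w y := deleteEdges_adj.mpr ⟨hwy, he⟩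
      exact ih.imp hadj.reachable.trans hadj.reachable.trans

theorem Preconnected.mem_side_or_mem_side (hG : G.Preconnected) (a b w : V) :
    w ∈ G.side a b ∨ w ∈ G.side b a := by
  obtain ⟨p⟩ := hG w a
  rw [side, side, Sym2.eq_swap (a := b)]
  exact (p.reachable_deleteEdges_or b).imp Reachable.symm Reachable.symm

theorem IsAcyclic.notMem_side (hG : G.IsAcyclic) {a b : V} (hab : G.Adj a b) : b ∉ G.side a b :=
  isBridge_iff.mp (isAcyclic_iff_forall_adj_isBridge.mp hG hab)

theorem IsTree.ncard_inter_side_add_ncard_inter_side (hG : G.IsTree) {a b : V} (hab : G.Adj a b)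
    {s : Set V} (hs : s.Finite) :
    (s ∩ G.side a b).ncard + (s ∩ G.side b a).ncard = s.ncard := by
  have hdisj : Disjoint (G.side a b) (G.side b a) := by
    refine Set.disjoint_left.mpr fun w hwa hwb => hG.isAcyclic.notMem_side hab ?_
    rw [side, Sym2.eq_swap] at hwb
    exact hwa.trans hwb.symm
  have hcover : G.side a b ∪ G.side b a = Set.univ :=
    Set.eq_univ_of_forall (hG.connected.preconnected.mem_side_or_mem_side a b)
  rw [← Set.ncard_union_eq (hdisj.mono Set.inter_subset_right Set.inter_subset_right)
    (hs.subset Set.inter_subset_left) (hs.subset Set.inter_subset_left),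
    ← Set.inter_union_distrib_left, hcover, Set.inter_univ]

theorem exists_adj_mem_side_of_mem_side {u v w : V} (hw : w ∈ G.side u v) (hwu : w ≠ u) :
    ∃ x, G.Adj u x ∧ x ≠ v ∧ w ∈ G.side x u := by
  classical
  obtain ⟨p⟩ := hw
  obtain ⟨p, hp⟩ := p.toPath
  cases p with
  | nil => exact absurd rfl hwu
  | @cons _ x _ hux q =>
    obtain ⟨hux, huvx⟩ := deleteEdges_adj.mp hux
    have hxv : x ≠ v := by rintro rfl; exact huvx rfl
    refine ⟨x, hux, hxv, reachable_deleteEdges_iff_exists_walk.mpr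
      ⟨q.map (.ofLE (deleteEdges_le _)), fun h => ?_⟩⟩
    have := (q.map (.ofLE (deleteEdges_le _))).snd_mem_support_of_mem_edges h
    simp only [Walk.support_map, Hom.coe_ofLE, List.map_id] at this
    exact (Walk.cons_isPath_iff _ _).mp hp |>.2 this

theorem IsAcyclic.side_ssubset_side (hG : G.IsAcyclic) {u v x : V} (hux : G.Adj u x)
    (hxv : x ≠ v) :
    G.side x u ⊂ G.side u v := by
  classical
  refine ⟨fun w hw => ?_, fun h => hG.notMem_side hux.symm (h .rfl)⟩
  have hux' : (G.deleteEdges {s(u, v)}).Adj u x :=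
    deleteEdges_adj.mpr ⟨hux, fun h => hxv (Sym2.congr_right.mp h)⟩
  by_contra hwu
  obtain ⟨p⟩ := hw
  have hnot : ¬ ((G.deleteEdges {s(x, u)}).deleteEdges {s(u, v)}).Reachable x w := fun h =>
    hwu <| hux'.reachable.trans (h.mono (deleteEdges_mono (deleteEdges_le _)))
  have hu := p.fst_mem_support_of_mem_edges (p.mem_edges_of_not_reachable_deleteEdges hnot)
  exact hG.notMem_side hux.symm ⟨p.takeUntil u hu⟩

theorem three_mul_ncard_leaves_inter_side_lt [Finite V] {u v : V} {n : ℕ} (hn : 2 ≤ n)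
    (hdeg : (G.neighborSet u).ncard ≤ 3) (huv : G.Adj u v)
    (hbranch : ∀ x, G.Adj u x → x ≠ v → 3 * (G.leaves ∩ G.side x u).ncard < n) :
    3 * (G.leaves ∩ G.side u v).ncard < 2 * n := by
  set t := (G.neighborSet u \ {v}).toFinite.toFinset with ht
  have hcover : (G.leaves ∩ G.side u v) \ {u} ⊆ ⋃ x ∈ t, G.leaves ∩ G.side x u := by
    rintro w ⟨⟨hwl, hws⟩, hwu⟩
    obtain ⟨x, hux, hxv, hwx⟩ := exists_adj_mem_side_of_mem_side hws hwu
    exact Set.mem_biUnion (x := x) (by simpa [ht] using ⟨hux, hxv⟩) ⟨hwl, hwx⟩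
  by_cases hu : u ∈ G.leaves
  · have ht_empty : t = ∅ := by
      obtain ⟨y, hy⟩ := Set.ncard_eq_one.mp hu
      have hvy : v ∈ ({y} : Set V) := hy ▸ huv
      simp [ht, hy, Set.mem_singleton_iff.mp hvy]
    have : (G.leaves ∩ G.side u v).ncard ≤ 1 := by
      rw [← Set.ncard_singleton u]
      refine Set.ncard_le_ncard (fun w hw => ?_)
      by_contra hwu
      simpa [ht_empty] using hcover ⟨hw, hwu⟩
    omega
  · have ht_card : t.card ≤ 2 := by
      rw [ht, ← Set.ncard_eq_toFinset_card,
        Set.ncard_sdiff_singleton_of_mem (G.mem_neighborSet u v |>.mpr huv)]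
      omega
    have hsub : G.leaves ∩ G.side u v ⊆ ⋃ x ∈ t, G.leaves ∩ G.side x u := fun w hw =>
      hcover ⟨hw, fun h => hu (h ▸ hw.1)⟩
    calc 3 * (G.leaves ∩ G.side u v).ncard
        ≤ 3 * ∑ x ∈ t, (G.leaves ∩ G.side x u).ncard :=
          Nat.mul_le_mul_left 3 <| (Set.ncard_le_ncard hsub).trans (t.set_ncard_biUnion_le _)
      _ ≤ ∑ x ∈ t, (n - 1) := by
          rw [Finset.mul_sum]
          refine Finset.sum_le_sum fun x hx => ?_
          have hx' : G.Adj u x ∧ x ≠ v := by simpa [ht] using hx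
          have := hbranch x hx'.1 hx'.2
          omega
      _ < 2 * n := by
          rw [Finset.sum_const, smul_eq_mul]
          exact (Nat.mul_le_mul_right _ ht_card).trans_lt (by omega)

theorem IsTree.two_le_ncard_leaves [Finite V] (hG : G.IsTree) (hedge : G.edgeSet.Nonempty) :
    2 ≤ G.leaves.ncard := by
  classical
  have := Fintype.ofFinite V
  obtain ⟨e, he⟩ := hedge
  have : Nontrivial V := by
    induction e using Sym2.ind with
    | _ a b => exact ⟨a, b, (G.mem_edgeSet.mp he).ne⟩
  obtain ⟨u, v, huv, hu, hv⟩ := hG.exists_ne_and_degree_eq_one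
  have hleaf : ∀ w, G.degree w = 1 → w ∈ G.leaves := fun w hw => by
    rw [leaves, Set.mem_ofPred_eq, ← Nat.card_coe_set_eq, Nat.card_eq_fintype_card,
      card_neighborSet_eq_degree, hw]
  rw [← Set.ncard_pair huv]
  exact Set.ncard_le_ncard (Set.pair_subset (hleaf u hu) (hleaf v hv))

end SimpleGraph

open SimpleGraph

/-- Let `T` be a finite tree with at least one edge in which every
vertex has degree at most 3, and let `n` be its number of leaves (degree-1 vertices).
Then there exists an edge `e = {u, v}` of `T` such that each of the two connected
components of `T` with `e` removed (the component of `u` and the component of `v`)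
contains at least `n / 3` leaves of `T`. -/
theorem stmt_1 {V : Type*} [Fintype V] (T : SimpleGraph V)
    (htree : T.IsTree)
    (hdeg : ∀ v : V, (T.neighborSet v).ncard ≤ 3)
    (hedge : T.edgeSet.Nonempty)
    (n : ℕ) (hn : n = {v : V | (T.neighborSet v).ncard = 1}.ncard) :
    ∃ u v : V, T.Adj u v ∧
      (n : ℝ) / 3 ≤
        ({w : V | (T.neighborSet w).ncard = 1 ∧
          (T.deleteEdges {s(u, v)}).Reachable u w}.ncard : ℝ) ∧
      (n : ℝ) / 3 ≤
        ({w : V | (T.neighborSet w).ncard = 1 ∧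
          (T.deleteEdges {s(u, v)}).Reachable v w}.ncard : ℝ) := by
  change n = T.leaves.ncard at hn
  have hn2 : 2 ≤ n := hn ▸ htree.two_le_ncard_leaves hedge
  have hsum {a b : V} (hab : T.Adj a b) :
      (T.leaves ∩ T.side a b).ncard + (T.leaves ∩ T.side b a).ncard = n :=
    hn ▸ htree.ncard_inter_side_add_ncard_inter_side hab (Set.toFinite _)
  set P := {p : V × V | T.Adj p.1 p.2 ∧ n ≤ 3 * (T.leaves ∩ T.side p.1 p.2).ncard}
  have hP : P.Nonempty := by
    obtain ⟨e, he⟩ := hedge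
    induction e using Sym2.ind with
    | _ a b =>
      by_cases hab : n ≤ 3 * (T.leaves ∩ T.side a b).ncard
      · exact ⟨(a, b), he, hab⟩
      · exact ⟨(b, a), T.adj_symm he, show n ≤ 3 * (T.leaves ∩ T.side b a).ncard by
          have := hsum (a := a) (b := b) he; omega⟩
  obtain ⟨⟨u, v⟩, ⟨huv, hu⟩, hmin⟩ :=
    Set.exists_min_image P (fun p => (T.side p.1 p.2).ncard) (Set.toFinite P) hP
  dsimp only at huv hu
  have hv : n ≤ 3 * (T.leaves ∩ T.side v u).ncard := by
    by_contra! hv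
    have hbranch (x : V) (hux : T.Adj u x) (hxv : x ≠ v) :
        3 * (T.leaves ∩ T.side x u).ncard < n := by
      by_contra! hx
      exact (Set.ncard_lt_ncard (htree.isAcyclic.side_ssubset_side hux hxv)).not_ge
        (hmin (x, u) ⟨T.adj_symm hux, hx⟩)
    have := three_mul_ncard_leaves_inter_side_lt hn2 (hdeg u) huv hbranch
    have := hsum huv
    omega
  have hvu : T.leaves ∩ T.side v u =
      {w | (T.neighborSet w).ncard = 1 ∧ (T.deleteEdges {s(u, v)}).Reachable v w} := by
    rw [side, Sym2.eq_swap]; rfl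
  refine ⟨u, v, huv, ?_, ?_⟩
  · rw [div_le_iff₀ three_pos]
    exact_mod_cast (show n ≤ (T.leaves ∩ T.side u v).ncard * 3 by omega)
  · rw [← hvu, div_le_iff₀ three_pos]
    exact_mod_cast (show n ≤ (T.leaves ∩ T.side v u).ncard * 3 by omega)
end

section
/- Let G be a simple graph on a finite vertex set V with |V| = n, and let r be a natural number. Suppose there exists a finite tree T in which every vertex has degree 1 or 3, whose leaves are in bijection with V, such that for every edge e of T, the biadjacency matrix over ℤ/2 of the bipartition of V induced by the two components of T − e has rank at most r. Then there exists a bipartition of V into sets A and B with |A| ≥ n/3 and |B| ≥ n/3 whose biadjacency matrix over ℤ/2 has rank at most r. -/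
open scoped Classical in
/-- The rank over `ℤ/2` of the biadjacency matrix of the bipartition `(A, B)` of the
vertex set of `G`: the `A × B` matrix whose `(a, b)` entry is `1` if `a` and `b` are
adjacent and `0` otherwise.  (It is encoded as a `V × V` matrix padded with zeros
outside `A × B`, which has the same rank.) -/
noncomputable def biadjRank {V : Type*} [Fintype V] (G : SimpleGraph V)
    (A B : Set V) : ℕ :=
  (Matrix.of fun a b : V =>
    if a ∈ A ∧ b ∈ B ∧ G.Adj a b then (1 : ZMod 2) else 0).rank

/-!
Pick an edge `ab` minimising the larger of its two leaf sides (the elements of `V` whose leaves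
lie in the components of `T - ab`), say the side of `a`, of size `s`. If `3 s > 2 n`, then `a`
is not a leaf, so its two other neighbours `c, d` split that side as `s = s_c + s_d`, both parts
nonempty since every branch of a finite tree contains a leaf. For the larger part, `s_c < s`
and the complementary side has `n - s_c ≤ n - s / 2 < s` leaves, so the edge `ca` beats the
minimum.
-/

namespace SimpleGraph

variable {W : Type*} {T : SimpleGraph W} {a b c x y z : W}

def branch (T : SimpleGraph W) (a b : W) : Set W :=
  {z | (T.deleteEdges {s(a, b)}).Reachable z a}

lemma self_mem_branch : a ∈ T.branch a b := Reachable.rfl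

lemma branch_swap (a b : W) :
    T.branch b a = {z | (T.deleteEdges {s(a, b)}).Reachable z b} := by
  rw [branch, Sym2.eq_swap]

lemma IsAcyclic.notMem_branch (hT : T.IsAcyclic) (hab : T.Adj a b) : b ∉ T.branch a b :=
  fun h => isBridge_iff.mp (isAcyclic_iff_forall_adj_isBridge.mp hT hab) h.symm

lemma Walk.reachable_deleteEdges_of_notMem_support {u v : W} (p : T.Walk u v)
    (hx : x ∉ p.support) {e : Sym2 W} (he : x ∈ e) : (T.deleteEdges {e}).Reachable u v :=
  ⟨p.toDeleteEdge e fun h => hx (Walk.mem_support_of_mem_edges h he)⟩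

lemma IsAcyclic.notMem_support_of_walk (hT : T.IsAcyclic) (hcx : T.Adj c x)
    (p : (T.deleteEdges {s(c, x)}).Walk z c) : x ∉ p.support :=
  by classical exact fun hx => hT.notMem_branch hcx (p.dropUntil x hx).reachable

lemma Connected.branch_union_branch (hT : T.Connected) (a b : W) :
    T.branch a b ∪ T.branch b a = Set.univ := by
  refine Set.eq_univ_of_forall fun z => by_contra fun hz => ?_
  obtain ⟨p⟩ := hT a z
  obtain ⟨e, -, hfst, hsnd⟩ := p.exists_boundary_dart _ (Or.inl self_mem_branch) hz
  rw [branch_swap a b] at hfst hsnd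
  by_cases he : e.edge = s(a, b)
  · rcases Sym2.eq_iff.mp he with ⟨-, h⟩ | ⟨-, h⟩
    · exact hsnd (Or.inr (h ▸ Reachable.rfl))
    · exact hsnd (Or.inl (h ▸ Reachable.rfl))
  · have hadj : (T.deleteEdges {s(a, b)}).Adj e.snd e.fst := by
      rw [deleteEdges_adj, Set.mem_singleton_iff, Sym2.eq_swap]
      exact ⟨e.adj.symm, he⟩
    exact hsnd (hfst.imp hadj.reachable.trans hadj.reachable.trans)

lemma IsAcyclic.disjoint_branch (hT : T.IsAcyclic) (hab : T.Adj a b) :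
    Disjoint (T.branch a b) (T.branch b a) := by
  rw [branch_swap a b, Set.disjoint_left]
  exact fun z hza hzb => hT.notMem_branch hab (hzb.symm.trans hza)

lemma IsAcyclic.branch_subset_branch (hT : T.IsAcyclic) (hcx : T.Adj c x) (hcy : c ≠ y) :
    T.branch c x ⊆ T.branch x y := by
  rintro z ⟨p⟩
  have hcx' : (T.deleteEdges {s(x, y)}).Adj c x := by
    rw [deleteEdges_adj, Set.mem_singleton_iff, Sym2.eq_iff]
    exact ⟨hcx, by rintro (⟨rfl, -⟩ | ⟨_, -⟩) <;> [exact hcx.ne rfl; exact hcy ‹_›]⟩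
  have hx : x ∉ (p.mapLe (deleteEdges_le _)).support := by
    simpa [Walk.support_mapLe_eq_support] using hT.notMem_support_of_walk hcx p
  exact ((p.mapLe _).reachable_deleteEdges_of_notMem_support hx
    (Sym2.mem_mk_left x y)).trans hcx'.reachable

lemma branch_subset_insert_biUnion :
    T.branch x y ⊆ insert x (⋃ c ∈ T.neighborSet x \ {y}, T.branch c x) := by
  classical
  rintro z ⟨p⟩
  obtain ⟨q, hq⟩ := p.reverse.toPath
  cases q with
  | nil => exact Or.inl rfl
  | @cons _ u _ hxu q =>
    rw [Walk.cons_isPath_iff] at hq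
    rw [deleteEdges_adj, Set.mem_singleton_iff] at hxu
    have huy : u ∉ ({y} : Set W) := fun h => hxu.2 (by rw [Set.mem_singleton_iff.mp h])
    have hx : x ∉ (q.mapLe (deleteEdges_le _)).reverse.support := by
      simpa [Walk.support_mapLe_eq_support] using hq.2
    exact Or.inr (Set.mem_biUnion (x := u) ⟨hxu.1, huy⟩
      ((q.mapLe _).reverse.reachable_deleteEdges_of_notMem_support hx (Sym2.mem_mk_right u x)))

lemma IsAcyclic.branch_eq_insert_biUnion (hT : T.IsAcyclic) :
    T.branch x y = insert x (⋃ c ∈ T.neighborSet x \ {y}, T.branch c x) := by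
  refine branch_subset_insert_biUnion.antisymm (Set.insert_subset self_mem_branch ?_)
  exact Set.iUnion₂_subset fun c hc => hT.branch_subset_branch (Adj.symm hc.1) hc.2

lemma branch_eq_singleton (h : T.neighborSet x = {y}) : T.branch x y = {x} := by
  refine (Set.singleton_subset_iff.mpr self_mem_branch).antisymm' ?_
  simpa [h] using branch_subset_insert_biUnion (T := T) (x := x) (y := y)

lemma IsAcyclic.exists_leaf_mem_branch [Finite W] (hT : T.IsAcyclic) (hxy : T.Adj x y) :
    ∃ z ∈ T.branch x y, (T.neighborSet z).ncard = 1 := by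
  induction hN : (T.branch x y).ncard using Nat.strong_induction_on generalizing x y with
  | _ N ih =>
  by_cases hx : (T.neighborSet x).ncard = 1
  · exact ⟨x, self_mem_branch, hx⟩
  obtain ⟨c, hc, hcy⟩ : ∃ c ∈ T.neighborSet x, c ≠ y := by
    by_contra! h
    exact hx (Set.ncard_eq_one.mpr ⟨y, Set.eq_singleton_iff_unique_mem.mpr ⟨hxy, h⟩⟩)
  have hcx : T.Adj c x := Adj.symm hc
  have hsub := hT.branch_subset_branch hcx hcy
  have hlt : (T.branch c x).ncard < N :=
    hN ▸ Set.ncard_lt_ncard ⟨hsub, fun h => hT.notMem_branch hcx (h self_mem_branch)⟩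
  obtain ⟨z, hz, hleaf⟩ := ih _ hlt hcx rfl
  exact ⟨z, hsub hz, hleaf⟩

variable {V : Type*} {f : V → W} {d : W}

lemma IsTree.ncard_preimage_branch_add_ncard [Finite V] (hT : T.IsTree) (hab : T.Adj a b) :
    (f ⁻¹' T.branch a b).ncard + (f ⁻¹' T.branch b a).ncard = Nat.card V := by
  rw [← Set.ncard_union_eq ((hT.isAcyclic.disjoint_branch hab).preimage f), ← Set.preimage_union,
    hT.connected.branch_union_branch, Set.preimage_univ, Set.ncard_univ]

lemma IsAcyclic.preimage_branch_nonempty [Finite W] (hT : T.IsAcyclic)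
    (hleaf : ∀ w, (T.neighborSet w).ncard = 1 → w ∈ Set.range f) (hab : T.Adj a b) :
    (f ⁻¹' T.branch a b).Nonempty := by
  obtain ⟨z, hz, hz_leaf⟩ := hT.exists_leaf_mem_branch hab
  obtain ⟨v, rfl⟩ := hleaf z hz_leaf
  exact ⟨v, hz⟩

lemma ncard_preimage_branch_of_leaf (hinj : f.Injective) (ha : a ∈ Set.range f)
    (h : T.neighborSet a = {b}) : (f ⁻¹' T.branch a b).ncard = 1 := by
  rw [branch_eq_singleton h, Set.ncard_preimage_of_injective_subset_range hinj
    (Set.singleton_subset_iff.mpr ha), Set.ncard_singleton]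

lemma IsAcyclic.ncard_preimage_branch_eq_add [Finite V] (hT : T.IsAcyclic) (ha : a ∉ Set.range f)
    (hcd : c ≠ d) (hnbr : T.neighborSet a \ {b} = {c, d}) :
    (f ⁻¹' T.branch a b).ncard = (f ⁻¹' T.branch c a).ncard + (f ⁻¹' T.branch d a).ncard := by
  have hca : T.Adj c a := Adj.symm (hnbr.superset (Set.mem_insert c {d})).1
  have hda : T.Adj d a := Adj.symm (hnbr.superset (Set.mem_insert_of_mem c rfl)).1
  have hsplit : f ⁻¹' T.branch a b = f ⁻¹' T.branch c a ∪ f ⁻¹' T.branch d a := by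
    rw [hT.branch_eq_insert_biUnion, hnbr, Set.biUnion_pair, ← Set.preimage_union]
    ext v
    simp only [Set.mem_preimage, Set.mem_insert_iff, or_iff_right_iff_imp]
    exact fun h => absurd ⟨v, h⟩ ha
  rw [hsplit, Set.ncard_union_eq (((hT.disjoint_branch hca).mono_right
    (hT.branch_subset_branch hda hcd.symm)).preimage f)]

lemma IsTree.exists_lighter_edge [Finite V] [Finite W] (hT : T.IsTree)
    (hdeg : ∀ w : W, (T.neighborSet w).ncard = 1 ∨ (T.neighborSet w).ncard = 3)
    (hinj : f.Injective) (hleaves : ∀ w : W, (T.neighborSet w).ncard = 1 ↔ w ∈ Set.range f)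
    (hab : T.Adj a b)
    (heavy : 2 * Nat.card V < 3 * (f ⁻¹' T.branch a b).ncard) :
    ∃ c, T.Adj c a ∧ (f ⁻¹' T.branch c a).ncard < (f ⁻¹' T.branch a b).ncard ∧
      (f ⁻¹' T.branch a c).ncard < (f ⁻¹' T.branch a b).ncard := by
  have hpos : ∀ {x y}, T.Adj x y → 0 < (f ⁻¹' T.branch x y).ncard := fun hxy =>
    (hT.isAcyclic.preimage_branch_nonempty (fun w => (hleaves w).mp) hxy).ncard_pos
  have hsum : ∀ {x y}, T.Adj x y → _ := fun hxy => hT.ncard_preimage_branch_add_ncard (f := f) hxy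
  have hb : b ∈ T.neighborSet a := hab
  rcases hdeg a with h1 | h3
  · have hnbr : T.neighborSet a = {b} := by
      obtain ⟨u, hu⟩ := Set.ncard_eq_one.mp h1
      rw [hu] at hb ⊢
      rw [Set.mem_singleton_iff.mp hb]
    have := ncard_preimage_branch_of_leaf hinj ((hleaves a).mp h1) hnbr
    have := hpos hab.symm
    have := hsum hab
    omega
  · obtain ⟨c, d, hcd, hnbr⟩ := Set.ncard_eq_two.mp
      (by rw [Set.ncard_sdiff_singleton_of_mem hb, h3] : (T.neighborSet a \ {b}).ncard = 2)
    have ha : a ∉ Set.range f := fun h => by have := (hleaves a).mpr h; omega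
    have hca : T.Adj c a := Adj.symm (hnbr.superset (Set.mem_insert c {d})).1
    have hda : T.Adj d a := Adj.symm (hnbr.superset (Set.mem_insert_of_mem c rfl)).1
    have hsplit := hT.isAcyclic.ncard_preimage_branch_eq_add ha hcd hnbr
    have := hsum hab
    rcases le_total (f ⁻¹' T.branch d a).ncard (f ⁻¹' T.branch c a).ncard with h | h
    · have := hpos hda
      have := hsum hca.symm
      exact ⟨c, hca, by omega, by omega⟩
    · have := hpos hca
      have := hsum hda.symm
      exact ⟨d, hda, by omega, by omega⟩

lemma IsTree.exists_balanced_edge [Finite V] [Finite W] (hT : T.IsTree)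
    (hdeg : ∀ w : W, (T.neighborSet w).ncard = 1 ∨ (T.neighborSet w).ncard = 3)
    (hinj : f.Injective) (hleaves : ∀ w : W, (T.neighborSet w).ncard = 1 ↔ w ∈ Set.range f) :
    ∃ a b, T.Adj a b ∧ 3 * (f ⁻¹' T.branch a b).ncard ≤ 2 * Nat.card V ∧
      3 * (f ⁻¹' T.branch b a).ncard ≤ 2 * Nat.card V := by
  obtain ⟨w⟩ := hT.connected.nonempty
  obtain ⟨u, hwu⟩ : (T.neighborSet w).Nonempty :=
    Set.nonempty_of_ncard_ne_zero (by rcases hdeg w with h | h <;> omega)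
  let μ (p : W × W) : ℕ := max (f ⁻¹' T.branch p.1 p.2).ncard (f ⁻¹' T.branch p.2 p.1).ncard
  obtain ⟨⟨a, b⟩, hab, hmin⟩ :=
    Set.exists_min_image {p : W × W | T.Adj p.1 p.2} μ (Set.toFinite _) ⟨(w, u), hwu⟩
  have balanced : ∀ {x y}, T.Adj x y → μ (x, y) = μ (a, b) →
      3 * (f ⁻¹' T.branch x y).ncard ≤ 2 * Nat.card V := by
    intro x y hxy hμ
    by_contra! heavy
    obtain ⟨c, hcx, hc, hc'⟩ := hT.exists_lighter_edge hdeg hinj hleaves hxy heavy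
    have := hmin (c, x) hcx
    simp only [μ, max_le_iff] at hμ this ⊢
    omega
  exact ⟨a, b, hab, balanced hab rfl, balanced hab.symm (max_comm _ _)⟩

end SimpleGraph

/-- Let `G` be a simple graph on a finite vertex set `V` with
`|V| = n` and let `r` be a natural number.  Suppose there is a finite tree `T` in
which every vertex has degree 1 or 3, whose leaves are in bijection with `V`
(via an injection `f : V → W` whose range is exactly the set of leaves), such that
for every edge of `T` the biadjacency matrix over `ℤ/2` of the bipartition of `V`
induced by the two components of `T` minus that edge has rank at most `r`.  Then
there is a bipartition of `V` into sets `A` and `B` with `|A| ≥ n/3` and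
`|B| ≥ n/3` whose biadjacency matrix over `ℤ/2` has rank at most `r`. -/
theorem stmt_2 {V : Type*} [Fintype V] (G : SimpleGraph V)
    (n : ℕ) (hn : n = Fintype.card V) (r : ℕ)
    (W : Type) (T : SimpleGraph W) (hW : Finite W)
    (htree : T.IsTree)
    (hdeg : ∀ w : W, (T.neighborSet w).ncard = 1 ∨ (T.neighborSet w).ncard = 3)
    (f : V → W) (hinj : Function.Injective f)
    (hleaves : ∀ w : W, (T.neighborSet w).ncard = 1 ↔ w ∈ Set.range f)
    (hrank : ∀ a b : W, T.Adj a b →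
      biadjRank G {v : V | (T.deleteEdges {s(a, b)}).Reachable (f v) a}
                  {v : V | (T.deleteEdges {s(a, b)}).Reachable (f v) b} ≤ r) :
    ∃ A B : Set V, A ∪ B = Set.univ ∧ A ∩ B = ∅ ∧
      (n : ℝ) / 3 ≤ (A.ncard : ℝ) ∧ (n : ℝ) / 3 ≤ (B.ncard : ℝ) ∧
      biadjRank G A B ≤ r := by
  obtain ⟨a, b, hab, hA, hB⟩ := htree.exists_balanced_edge hdeg hinj hleaves
  have hsum := htree.ncard_preimage_branch_add_ncard (f := f) hab
  rw [Nat.card_eq_fintype_card, ← hn] at hA hB hsum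
  refine ⟨f ⁻¹' T.branch a b, f ⁻¹' T.branch b a, ?_, ?_, ?_, ?_, ?_⟩
  · rw [← Set.preimage_union, htree.connected.branch_union_branch, Set.preimage_univ]
  · rw [← Set.preimage_inter, (htree.isAcyclic.disjoint_branch hab).inter_eq, Set.preimage_empty]
  · rw [div_le_iff₀ three_pos]
    exact_mod_cast (by omega : n ≤ _ * 3)
  · rw [div_le_iff₀ three_pos]
    exact_mod_cast (by omega : n ≤ _ * 3)
  · rw [SimpleGraph.branch_swap a b]
    exact hrank a b hab
end

section
/- Let k ≥ 1 and let r be a natural number. If a bipartition of the vertex set {0, 1, …, 3^k − 1} of G_k into two sets A and B has biadjacency matrix over ℤ/2 of rank at most r, then the number of blocks of the bipartition is at most 4r + 1. -/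
/-- The recursively defined vertex sets `S(i,j)`:
`S(0,j) = {2j}` and `S(i+1,m) = S(i,3m) ∪ S(i,3m+1)`. -/
def Sset : ℕ → ℕ → Finset ℕ
  | 0, j => {2 * j}
  | i + 1, m => Sset i (3 * m) ∪ Sset i (3 * m + 1)

/-- The graph `G_k` on the vertex set `{0, 1, …, 3^k − 1}` (encoded as `Fin (3^k)`):
its edges are (a) `{m, m+1}` for `0 ≤ m ≤ 3^k − 2`, and (b) `{u, v}` for every level
`0 ≤ i ≤ k−1`, every `j` with `0 ≤ j < (3^(k−i) + 1)/2 − 1`, every `u ∈ S(i,j)` and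
every `v ∈ S(i,j+1)`. -/
def Gk (k : ℕ) : SimpleGraph (Fin (3 ^ k)) :=
  SimpleGraph.fromRel fun u v =>
    ((u : ℕ) + 1 = (v : ℕ)) ∨
    ∃ i < k, ∃ j : ℕ, j + 1 < (3 ^ (k - i) + 1) / 2 ∧
      (u : ℕ) ∈ Sset i j ∧ (v : ℕ) ∈ Sset i (j + 1)

/-- For a bipartition `(A, Aᶜ)` of `{0, …, n−1}`, the pair `(lo, hi)` delimits a
block: a maximal run of consecutive elements lying on the same side as `lo`. -/
def IsBlock {n : ℕ} (A : Set (Fin n)) (lo hi : Fin n) : Prop :=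
  lo ≤ hi ∧
  (∀ x : Fin n, lo ≤ x → x ≤ hi → (x ∈ A ↔ lo ∈ A)) ∧
  (∀ x : Fin n, (x : ℕ) + 1 = (lo : ℕ) → ¬(x ∈ A ↔ lo ∈ A)) ∧
  (∀ x : Fin n, (hi : ℕ) + 1 = (x : ℕ) → ¬(x ∈ A ↔ lo ∈ A))

/-- The number of blocks (on both sides) of the bipartition `(A, Aᶜ)`. -/
noncomputable def numBlocks {n : ℕ} (A : Set (Fin n)) : ℕ :=
  {p : Fin n × Fin n | IsBlock A p.1 p.2}.ncard

/-! ### Auxiliary lemmas -/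

lemma sset_even : ∀ i j x, x ∈ Sset i j → 2 ∣ x := by
  intro i
  induction i with
  | zero => intro j x hx; simp [Sset] at hx; omega
  | succ i ih =>
      intro j x hx
      rw [Sset, Finset.mem_union] at hx
      rcases hx with h | h
      · exact ih _ _ h
      · exact ih _ _ h

lemma gk_adj_succ {k : ℕ} (u v : Fin (3 ^ k)) (h : (u : ℕ) + 1 = (v : ℕ)) :
    (Gk k).Adj u v := by
  rw [Gk, SimpleGraph.fromRel_adj]
  exact ⟨by intro he; rw [he] at h; omega, Or.inl (Or.inl h)⟩

lemma gk_not_adj_odd {k : ℕ} (u v : Fin (3 ^ k)) (hu : ¬ 2 ∣ (u : ℕ))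
    (h1 : (u : ℕ) + 1 ≠ (v : ℕ)) (h2 : (v : ℕ) + 1 ≠ (u : ℕ)) :
    ¬ (Gk k).Adj u v := by
  rw [Gk, SimpleGraph.fromRel_adj]
  rintro ⟨-, h | h⟩ <;> rcases h with h | ⟨i, -, j, -, hm1, hm2⟩
  · exact h1 h
  · exact hu (sset_even _ _ _ hm1)
  · exact h2 h
  · exact hu (sset_even _ _ _ hm2)

lemma exists_sep (T : Finset ℕ) :
    ∃ S : Finset ℕ, S ⊆ T ∧ (∀ p ∈ S, ∀ q ∈ S, p < q → p + 3 ≤ q) ∧ T.card ≤ 3 * S.card := by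
  classical
  induction T using Finset.strongInduction with
  | _ T ih =>
    rcases T.eq_empty_or_nonempty with rfl | hne
    · exact ⟨∅, by simp⟩
    · set p := T.min' hne with hp
      set T' := T \ {p, p + 1, p + 2} with hT'
      have hpT : p ∈ T := T.min'_mem hne
      have hpT' : p ∉ T' := by simp [hT']
      have hsub : T' ⊆ T := Finset.sdiff_subset
      have hss : T' ⊂ T := (Finset.ssubset_iff_of_subset hsub).2 ⟨p, hpT, hpT'⟩
      obtain ⟨S', hS'sub, hS'sep, hS'card⟩ := ih T' hss
      have hpS' : p ∉ S' := fun h => hpT' (hS'sub h)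
      refine ⟨insert p S', ?_, ?_, ?_⟩
      · intro x hx
        rcases Finset.mem_insert.1 hx with rfl | hx
        · exact hpT
        · exact hsub (hS'sub hx)
      · intro a ha b hb hab
        rcases Finset.mem_insert.1 ha with rfl | ha <;>
          rcases Finset.mem_insert.1 hb with rfl | hb
        · omega
        · have hbT' := hS'sub hb
          have h2 : p ≤ b := T.min'_le b (hsub hbT')
          have h3 : b ∉ ({p, p + 1, p + 2} : Finset ℕ) := (Finset.mem_sdiff.1 hbT').2
          simp only [Finset.mem_insert, Finset.mem_singleton] at h3
          omega
        · have haT' := hS'sub ha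
          have h2 : p ≤ a := T.min'_le a (hsub haT')
          omega
        · exact hS'sep a ha b hb hab
      · have h1 : T.card ≤ T'.card + ({p, p + 1, p + 2} : Finset ℕ).card :=
          Finset.card_le_card_sdiff_add_card
        have h2 : ({p, p + 1, p + 2} : Finset ℕ).card ≤ 3 := by
          apply le_trans (Finset.card_insert_le _ _)
          apply Nat.succ_le_succ
          apply le_trans (Finset.card_insert_le _ _)
          simp
        rw [Finset.card_insert_of_notMem hpS']
        omega

open Matrix in
lemma rank_ge_of_cols {n : ℕ} (M : Matrix (Fin n) (Fin n) (ZMod 2)) {ι : Type*} [Fintype ι]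
    (b : ι → Fin n) (hli : LinearIndependent (ZMod 2) (fun q => Mᵀ (b q))) :
    Fintype.card ι ≤ M.rank := by
  rw [Matrix.rank_eq_finrank_span_cols]
  calc Fintype.card ι
      = Module.finrank (ZMod 2) (Submodule.span (ZMod 2) (Set.range fun q => Mᵀ (b q))) :=
        (finrank_span_eq_card hli).symm
    _ ≤ Module.finrank (ZMod 2) (Submodule.span (ZMod 2) (Set.range Mᵀ)) := by
        apply Submodule.finrank_mono
        apply Submodule.span_mono
        rintro _ ⟨q, rfl⟩
        exact ⟨b q, rfl⟩

lemma isBlock_hi_unique {n : ℕ} {A : Set (Fin n)} {lo hi hi' : Fin n}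
    (h : IsBlock A lo hi) (h' : IsBlock A lo hi') : hi = hi' := by
  by_contra hne
  wlog hlt : (hi : ℕ) < (hi' : ℕ) generalizing hi hi'
  · have hvne : (hi : ℕ) ≠ (hi' : ℕ) := fun hh => hne (Fin.ext hh)
    exact this h' h (Ne.symm hne) (by omega)
  · unfold IsBlock at h h'
    obtain ⟨hle, hin, hpred, hmax⟩ := h
    obtain ⟨hle', hin', _, _⟩ := h'
    have hxlt : (hi : ℕ) + 1 < n := by have := hi'.isLt; omega
    have hbad := hmax ⟨(hi : ℕ) + 1, hxlt⟩ rfl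
    apply hbad
    apply hin' ⟨(hi : ℕ) + 1, hxlt⟩
    · rw [Fin.le_def] at hle ⊢
      simp only [Fin.val_mk]
      omega
    · rw [Fin.le_def]
      simp only [Fin.val_mk]
      omega


open Matrix

/-- Let `k ≥ 1` and `r : ℕ`.  If a bipartition of the vertex set of
`G_k` into two sets `A` and `B` has biadjacency matrix over `ℤ/2` of rank at most
`r`, then the number of blocks of the bipartition is at most `4r + 1`. -/
theorem stmt_3 (k : ℕ) (hk : 1 ≤ k) (r : ℕ)
    (A B : Set (Fin (3 ^ k)))
    (hcover : A ∪ B = Set.univ) (hdisj : A ∩ B = ∅)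
    (hrank : biadjRank (Gk k) A B ≤ r) :
    numBlocks A ≤ 4 * r + 1 := by
  classical
  have hn3 : 3 ≤ 3 ^ k := by
    calc 3 = 3 ^ 1 := (pow_one 3).symm
    _ ≤ 3 ^ k := Nat.pow_le_pow_right (by norm_num) hk
  have hB : ∀ x : Fin (3 ^ k), x ∉ A → x ∈ B := by
    intro x hx
    have hx2 : x ∈ A ∪ B := hcover ▸ Set.mem_univ x
    rcases hx2 with h | h
    · exact absurd h hx
    · exact h
  set A' : Set ℕ := {m | ∃ h : m < 3 ^ k, (⟨m, h⟩ : Fin (3 ^ k)) ∈ A} with hA'def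
  have hA' : ∀ m (h : m < 3 ^ k), (m ∈ A' ↔ (⟨m, h⟩ : Fin (3 ^ k)) ∈ A) := by
    intro m h
    constructor
    · rintro ⟨h', hm⟩; exact hm
    · intro hm; exact ⟨h, hm⟩
  set T : Finset ℕ :=
    (Finset.range (3 ^ k - 1)).filter (fun p => ¬ (p ∈ A' ↔ (p + 1) ∈ A')) with hT
  -- Step A : numBlocks A ≤ T.card + 1
  have hstepA : numBlocks A ≤ T.card + 1 := by
    set P : Set (Fin (3 ^ k) × Fin (3 ^ k)) := {p | IsBlock A p.1 p.2} with hP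
    set f : Fin (3 ^ k) × Fin (3 ^ k) → ℕ := fun p => (p.1 : ℕ) with hf
    have hinj : Set.InjOn f P := by
      rintro ⟨lo1, hi1⟩ h1 ⟨lo2, hi2⟩ h2 heq
      have hlo : lo1 = lo2 := Fin.ext heq
      subst hlo
      have : hi1 = hi2 := isBlock_hi_unique h1 h2
      rw [this]
    have himg : f '' P ⊆ insert (0 : ℕ) ((fun m => m + 1) '' (T : Set ℕ)) := by
      rintro _ ⟨⟨lo, hi⟩, hblk, rfl⟩
      simp only [hP, Set.mem_setOf_eq] at hblk
      unfold IsBlock at hblk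
      obtain ⟨hle, hin, hpred, hmax⟩ := hblk
      by_cases h0 : (lo : ℕ) = 0
      · exact Set.mem_insert_iff.2 (Or.inl h0)
      · refine Set.mem_insert_iff.2 (Or.inr ⟨(lo : ℕ) - 1, ?_,
          show ((lo : ℕ) - 1) + 1 = (lo : ℕ) by omega⟩)
        have hlolt : (lo : ℕ) < 3 ^ k := lo.isLt
        have hxlt : (lo : ℕ) - 1 < 3 ^ k := by omega
        have hx := hpred ⟨(lo : ℕ) - 1, hxlt⟩ (by simp only [Fin.val_mk]; omega)
        rw [Finset.mem_coe, hT, Finset.mem_filter]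
        constructor
        · exact Finset.mem_range.2 (by omega)
        · intro hiff
          apply hx
          have h1 : ((lo : ℕ) - 1) ∈ A' ↔ (⟨(lo : ℕ) - 1, hxlt⟩ : Fin (3 ^ k)) ∈ A :=
            hA' _ hxlt
          have hval : (lo : ℕ) - 1 + 1 = (lo : ℕ) := by omega
          have h2 : ((lo : ℕ) - 1 + 1) ∈ A' ↔ lo ∈ A := by
            rw [hval]
            have := hA' (lo : ℕ) hlolt
            simpa using this
          exact (h1.symm.trans hiff).trans h2
    have hQfin : (insert (0 : ℕ) ((fun m => m + 1) '' (T : Set ℕ))).Finite :=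
      (T.finite_toSet.image _).insert 0
    calc numBlocks A = P.ncard := rfl
      _ = (f '' P).ncard := (Set.ncard_image_of_injOn hinj).symm
      _ ≤ (insert (0 : ℕ) ((fun m => m + 1) '' (T : Set ℕ))).ncard :=
          Set.ncard_le_ncard himg hQfin
      _ ≤ ((fun m => m + 1) '' (T : Set ℕ)).ncard + 1 := Set.ncard_insert_le _ _
      _ ≤ (T : Set ℕ).ncard + 1 := by
          have := Set.ncard_image_le (f := fun m => m + 1) T.finite_toSet
          omega
      _ = T.card + 1 := by rw [Set.ncard_coe_finset]
  -- Step B : separated subset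
  obtain ⟨S, hSsub, hsep, hcardTS⟩ := exists_sep T
  -- Step C : S.card ≤ biadjRank
  have hstepC : S.card ≤ biadjRank (Gk k) A B := by
    have hbd : ∀ p : {x // x ∈ S}, ∃ a b : Fin (3 ^ k),
        a ∈ A ∧ b ∈ B ∧ (Gk k).Adj a b ∧ (a : ℕ) + (b : ℕ) = 2 * p.1 + 1 ∧
        p.1 ≤ (a : ℕ) ∧ (a : ℕ) ≤ p.1 + 1 ∧ p.1 ≤ (b : ℕ) ∧ (b : ℕ) ≤ p.1 + 1 := by
      intro p
      have hpT : p.1 ∈ T := hSsub p.2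
      rw [hT, Finset.mem_filter, Finset.mem_range] at hpT
      obtain ⟨hplt, hpcross⟩ := hpT
      have h0 : p.1 < 3 ^ k := by omega
      have h1 : p.1 + 1 < 3 ^ k := by omega
      have hadj : (Gk k).Adj ⟨p.1, h0⟩ ⟨p.1 + 1, h1⟩ := gk_adj_succ _ _ rfl
      by_cases hF0 : (⟨p.1, h0⟩ : Fin (3 ^ k)) ∈ A
      · have hF1 : (⟨p.1 + 1, h1⟩ : Fin (3 ^ k)) ∉ A := by
          intro hF1
          exact hpcross ⟨fun _ => (hA' _ h1).2 hF1, fun _ => (hA' _ h0).2 hF0⟩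
        exact ⟨⟨p.1, h0⟩, ⟨p.1 + 1, h1⟩, hF0, hB _ hF1, hadj, by simp only [Fin.val_mk]; omega,
          by simp only [Fin.val_mk]; omega, by simp only [Fin.val_mk]; omega,
          by simp only [Fin.val_mk]; omega, by simp only [Fin.val_mk]; omega⟩
      · have hF1 : (⟨p.1 + 1, h1⟩ : Fin (3 ^ k)) ∈ A := by
          by_contra hF1
          exact hpcross ⟨fun h => ((hF0 ((hA' _ h0).1 h)).elim),
            fun h => ((hF1 ((hA' _ h1).1 h)).elim)⟩
        exact ⟨⟨p.1 + 1, h1⟩, ⟨p.1, h0⟩, hF1, hB _ hF0, hadj.symm, by simp only [Fin.val_mk]; omega,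
          by simp only [Fin.val_mk]; omega, by simp only [Fin.val_mk]; omega,
          by simp only [Fin.val_mk]; omega, by simp only [Fin.val_mk]; omega⟩
    choose av bv hAa hBb hAdj hsum hal hau hbl hbu using hbd
    have hfar : ∀ p q : {x // x ∈ S}, p ≠ q →
        ((av p : ℕ) + 1 ≠ (bv q : ℕ) ∧ (bv q : ℕ) + 1 ≠ (av p : ℕ)) := by
      intro p q hne
      have hne' : p.1 ≠ q.1 := fun h => hne (Subtype.ext h)
      have h3 : p.1 + 3 ≤ q.1 ∨ q.1 + 3 ≤ p.1 := by
        rcases Nat.lt_or_ge p.1 q.1 with h | h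
        · exact Or.inl (hsep p.1 p.2 q.1 q.2 h)
        · exact Or.inr (hsep q.1 q.2 p.1 p.2 (by omega))
      have e1 := hal p; have e2 := hau p; have e3 := hbl q; have e4 := hbu q
      omega
    have hnotadj : ∀ p q : {x // x ∈ S}, p ≠ q →
        (¬ 2 ∣ (av p : ℕ) ∨ ¬ 2 ∣ (bv q : ℕ)) → ¬ (Gk k).Adj (av p) (bv q) := by
      intro p q hne hodd
      obtain ⟨hd1, hd2⟩ := hfar p q hne
      rcases hodd with h | h
      · exact gk_not_adj_odd _ _ h hd1 hd2
      · intro hadj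
        exact gk_not_adj_odd _ _ h hd2 hd1 hadj.symm
    set M : Matrix (Fin (3 ^ k)) (Fin (3 ^ k)) (ZMod 2) :=
      Matrix.of fun a b : Fin (3 ^ k) =>
        if a ∈ A ∧ b ∈ B ∧ (Gk k).Adj a b then (1 : ZMod 2) else 0 with hM
    have hMone : ∀ p : {x // x ∈ S}, M (av p) (bv p) = 1 := by
      intro p
      simp only [hM, Matrix.of_apply]
      rw [if_pos ⟨hAa p, hBb p, hAdj p⟩]
    have hMzero : ∀ p q : {x // x ∈ S}, ¬ (Gk k).Adj (av p) (bv q) →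
        M (av p) (bv q) = 0 := by
      intro p q hna
      simp only [hM, Matrix.of_apply]
      rw [if_neg (fun h => hna h.2.2)]
    have hli : LinearIndependent (ZMod 2) (fun q : {x // x ∈ S} => Mᵀ (bv q)) := by
      rw [Fintype.linearIndependent_iff]
      intro g hg
      have heval : ∀ p : {x // x ∈ S},
          (∑ q : {x // x ∈ S}, g q * M (av p) (bv q)) = 0 := by
        intro p
        have h1 := congrFun hg (av p)
        simpa [Finset.sum_apply, Matrix.transpose_apply] using h1
      have stage1 : ∀ p : {x // x ∈ S}, ¬ 2 ∣ (av p : ℕ) → g p = 0 := by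
        intro p hodd
        have h2 := heval p
        rw [Finset.sum_eq_single p] at h2
        · rwa [hMone p, mul_one] at h2
        · intro q _ hqp
          rw [hMzero p q (hnotadj p q (Ne.symm hqp) (Or.inl hodd)), mul_zero]
        · intro h; exact absurd (Finset.mem_univ p) h
      intro p
      by_cases hdvd : 2 ∣ (av p : ℕ)
      · have h2 := heval p
        rw [Finset.sum_eq_single p] at h2
        · rwa [hMone p, mul_one] at h2
        · intro q _ hqp
          by_cases hq : 2 ∣ (av q : ℕ)
          · have hbodd : ¬ 2 ∣ (bv q : ℕ) := by have := hsum q; omega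
            rw [hMzero p q (hnotadj p q (Ne.symm hqp) (Or.inr hbodd)), mul_zero]
          · rw [stage1 q hq, zero_mul]
        · intro h; exact absurd (Finset.mem_univ p) h
      · exact stage1 p hdvd
    have hcard := rank_ge_of_cols M (fun q : {x // x ∈ S} => bv q) hli
    rw [Fintype.card_coe] at hcard
    have hMr : biadjRank (Gk k) A B = M.rank := rfl
    rw [hMr]
    exact hcard
  have hfinal : S.card ≤ r := le_trans hstepC hrank
  omega
end

section
/- For every positive integer c there exist a real number α > 0 and a natural number k₀ such that for every k > k₀ and every bipartition of {0, 1, …, 3^k − 1} into sets A and B with |A| ≥ 3^k/3 and |B| ≥ 3^k/3, in which at most c blocks are contained in A and at most c blocks are contained in B, there exist a block R contained in A and a block B′ contained in B such that min(|R|, |B′|) ≥ α · 3^{k/c²} · (1 + ℓ), where ℓ is the number of integers lying strictly between R and B′ in the natural order (i.e., strictly between the maximum of the earlier of the two blocks and the minimum of the later one). -/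
namespace Stmt4Aux

variable {n : ℕ}

lemma exists_block (A : Set (Fin n)) (x : Fin n) :
    ∃ p : Fin n × Fin n, IsBlock A p.1 p.2 ∧ p.1 ≤ x ∧ x ≤ p.2 ∧ (p.1 ∈ A ↔ x ∈ A) := by
  classical
  set lset : Set ℕ :=
    {l | l ≤ (x : ℕ) ∧ ∀ m : Fin n, l ≤ (m : ℕ) → (m : ℕ) ≤ (x : ℕ) → (m ∈ A ↔ x ∈ A)}
    with hlset
  have hxl : (x : ℕ) ∈ lset := by
    refine ⟨le_rfl, fun m hm1 hm2 => ?_⟩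
    have : m = x := Fin.ext (le_antisymm hm2 hm1)
    rw [this]
  have hl0mem := Nat.sInf_mem (⟨_, hxl⟩ : lset.Nonempty)
  set l0 := sInf lset with hl0def
  obtain ⟨hl0x, hl0all⟩ := hl0mem
  have hl0n : l0 < n := lt_of_le_of_lt hl0x x.isLt
  set hset : Set ℕ :=
    {h | (x : ℕ) ≤ h ∧ h < n ∧ ∀ m : Fin n, (x : ℕ) ≤ (m : ℕ) → (m : ℕ) ≤ h → (m ∈ A ↔ x ∈ A)}
    with hhset
  have hxh : (x : ℕ) ∈ hset := by
    refine ⟨le_rfl, x.isLt, fun m hm1 hm2 => ?_⟩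
    have : m = x := Fin.ext (le_antisymm hm2 hm1)
    rw [this]
  have hbdd : BddAbove hset := ⟨n, fun y hy => hy.2.1.le⟩
  have hh0mem := Nat.sSup_mem (⟨_, hxh⟩ : hset.Nonempty) hbdd
  set h0 := sSup hset with hh0def
  obtain ⟨hxh0, hh0n, hh0all⟩ := hh0mem
  have hloA : ((⟨l0, hl0n⟩ : Fin n) ∈ A ↔ x ∈ A) := hl0all ⟨l0, hl0n⟩ le_rfl hl0x
  refine ⟨(⟨l0, hl0n⟩, ⟨h0, hh0n⟩), ⟨?_, ?_, ?_, ?_⟩, ?_, ?_, ?_⟩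
  · exact Fin.mk_le_mk.mpr (le_trans hl0x hxh0)
  · intro m hm1 hm2
    have hm1' : l0 ≤ (m : ℕ) := hm1
    have hm2' : (m : ℕ) ≤ h0 := hm2
    rcases le_total ((m : ℕ)) ((x : ℕ)) with h | h
    · exact (hl0all m hm1' h).trans hloA.symm
    · exact (hh0all m h hm2').trans hloA.symm
  · intro y hy hsame
    have hy' : (y : ℕ) + 1 = l0 := hy
    have hyx : (y ∈ A ↔ x ∈ A) := hsame.trans hloA
    have hymem : (y : ℕ) ∈ lset := by
      refine ⟨by omega, fun m hm1 hm2 => ?_⟩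
      rcases eq_or_lt_of_le hm1 with h | h
      · have : m = y := Fin.ext h.symm
        rw [this]; exact hyx
      · exact hl0all m (by omega) hm2
    have := Nat.sInf_le hymem
    omega
  · intro y hy hsame
    have hy' : h0 + 1 = (y : ℕ) := hy
    have hyx : (y ∈ A ↔ x ∈ A) := hsame.trans hloA
    have hymem : (y : ℕ) ∈ hset := by
      refine ⟨by omega, y.isLt, fun m hm1 hm2 => ?_⟩
      rcases le_or_gt ((m : ℕ)) h0 with h | h
      · exact hh0all m hm1 h
      · have : m = y := Fin.ext (by omega)
        rw [this]; exact hyx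
    have := le_csSup hbdd hymem
    omega
  · exact Fin.mk_le_mk.mpr hl0x
  · exact Fin.mk_le_mk.mpr hxh0
  · exact hloA

noncomputable def blockOf (A : Set (Fin n)) (x : Fin n) : Fin n × Fin n :=
  (exists_block A x).choose

lemma blockOf_spec (A : Set (Fin n)) (x : Fin n) :
    IsBlock A (blockOf A x).1 (blockOf A x).2 ∧ (blockOf A x).1 ≤ x ∧ x ≤ (blockOf A x).2 ∧
      ((blockOf A x).1 ∈ A ↔ x ∈ A) :=
  (exists_block A x).choose_spec

lemma block_eq_of_mem {A : Set (Fin n)} {l1 h1 l2 h2 m : Fin n}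
    (b1 : IsBlock A l1 h1) (b2 : IsBlock A l2 h2)
    (h11 : (l1 : ℕ) ≤ m) (h12 : (m : ℕ) ≤ h1) (h21 : (l2 : ℕ) ≤ m) (h22 : (m : ℕ) ≤ h2) :
    l1 = l2 ∧ h1 = h2 := by
  obtain ⟨hle1, hc1, hlb1, hub1⟩ := b1
  obtain ⟨hle2, hc2, hlb2, hub2⟩ := b2
  have hm1 : m ∈ A ↔ l1 ∈ A := hc1 m h11 h12
  have hm2 : m ∈ A ↔ l2 ∈ A := hc2 m h21 h22
  have hl12 : l1 ∈ A ↔ l2 ∈ A := hm1.symm.trans hm2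
  constructor
  · rcases lt_trichotomy ((l1 : ℕ)) ((l2 : ℕ)) with h | h | h
    · exfalso
      have hwlt : (l2 : ℕ) - 1 < n := by omega
      set w : Fin n := ⟨(l2 : ℕ) - 1, hwlt⟩ with hw
      have hwA : w ∈ A ↔ l1 ∈ A := hc1 w (by simp [hw, Fin.le_def]; omega)
        (by simp [hw, Fin.le_def]; omega)
      exact hlb2 w (by simp [hw]; omega) (hwA.trans hl12)
    · exact Fin.ext h
    · exfalso
      have hwlt : (l1 : ℕ) - 1 < n := by omega
      set w : Fin n := ⟨(l1 : ℕ) - 1, hwlt⟩ with hw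
      have hwA : w ∈ A ↔ l2 ∈ A := hc2 w (by simp [hw, Fin.le_def]; omega)
        (by simp [hw, Fin.le_def]; omega)
      exact hlb1 w (by simp [hw]; omega) (hwA.trans hl12.symm)
  · rcases lt_trichotomy ((h1 : ℕ)) ((h2 : ℕ)) with h | h | h
    · exfalso
      have hwlt : (h1 : ℕ) + 1 < n := by
        have := h2.isLt; omega
      set w : Fin n := ⟨(h1 : ℕ) + 1, hwlt⟩ with hw
      have hwA : w ∈ A ↔ l2 ∈ A := hc2 w (by simp [hw, Fin.le_def]; omega)
        (by simp [hw, Fin.le_def]; omega)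
      exact hub1 w (by simp [hw]) (hwA.trans hl12.symm)
    · exact Fin.ext h
    · exfalso
      have hwlt : (h2 : ℕ) + 1 < n := by
        have := h1.isLt; omega
      set w : Fin n := ⟨(h2 : ℕ) + 1, hwlt⟩ with hw
      have hwA : w ∈ A ↔ l1 ∈ A := hc1 w (by simp [hw, Fin.le_def]; omega)
        (by simp [hw, Fin.le_def]; omega)
      exact hub2 w (by simp [hw]) (hwA.trans hl12)

lemma blockOf_mem_gap {A : Set (Fin n)} {P Q : Fin n × Fin n}
    (hP : IsBlock A P.1 P.2) (hQ : IsBlock A Q.1 Q.2) {x : Fin n}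
    (hx1 : (P.2 : ℕ) < (x : ℕ)) (hx2 : (x : ℕ) < (Q.1 : ℕ)) :
    IsBlock A (blockOf A x).1 (blockOf A x).2 ∧ (P.2 : ℕ) < ((blockOf A x).1 : ℕ) ∧
      ((blockOf A x).2 : ℕ) < (Q.1 : ℕ) := by
  obtain ⟨hb, hl, hh, -⟩ := blockOf_spec A x
  have hl' : ((blockOf A x).1 : ℕ) ≤ (x : ℕ) := hl
  have hh' : (x : ℕ) ≤ ((blockOf A x).2 : ℕ) := hh
  refine ⟨hb, ?_, ?_⟩
  · by_contra hcon
    push_neg at hcon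
    have := block_eq_of_mem hb hP (m := P.2) hcon (by omega) (hP.1 : (P.1 : ℕ) ≤ (P.2 : ℕ)) le_rfl
    have : ((blockOf A x).2 : ℕ) = (P.2 : ℕ) := congrArg Fin.val this.2
    omega
  · by_contra hcon
    push_neg at hcon
    have := block_eq_of_mem hb hQ (m := Q.1) (by omega) hcon le_rfl
      (hQ.1 : (Q.1 : ℕ) ≤ (Q.2 : ℕ))
    have : ((blockOf A x).1 : ℕ) = (Q.1 : ℕ) := congrArg Fin.val this.1
    omega

lemma blocks_disjoint {A : Set (Fin n)} {P Q : Fin n × Fin n}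
    (hP : IsBlock A P.1 P.2) (hQ : IsBlock A Q.1 Q.2)
    (hop : ¬(P.1 ∈ A ↔ Q.1 ∈ A)) :
    (P.2 : ℕ) < (Q.1 : ℕ) ∨ (Q.2 : ℕ) < (P.1 : ℕ) := by
  by_contra h
  push_neg at h
  obtain ⟨h1, h2⟩ := h
  rcases le_total ((P.1 : ℕ)) ((Q.1 : ℕ)) with h3 | h3
  · obtain ⟨he, -⟩ := block_eq_of_mem hP hQ (m := Q.1) h3 h1 le_rfl
      (hQ.1 : (Q.1 : ℕ) ≤ (Q.2 : ℕ))
    exact hop (he ▸ Iff.rfl)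
  · obtain ⟨he, -⟩ := block_eq_of_mem hP hQ (m := P.1) le_rfl
      (hP.1 : (P.1 : ℕ) ≤ (P.2 : ℕ)) h3 h2
    exact hop (he ▸ Iff.rfl)

lemma cover_card {A : Set (Fin n)} {S : Set (Fin n)} {F : Set (Fin n × Fin n)}
    (hS : S.Nonempty) (hcov : ∀ x ∈ S, blockOf A x ∈ F) :
    ∃ p ∈ F, S.ncard ≤ F.ncard * (((p.2 : ℕ)) - (p.1 : ℕ) + 1) := by
  classical
  have hSfin : S.Finite := S.toFinite
  have hFfin : F.Finite := F.toFinite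
  set s := hSfin.toFinset with hs
  set t := hFfin.toFinset with ht
  have hs_ne : s.Nonempty := by
    obtain ⟨x, hx⟩ := hS
    exact ⟨x, hSfin.mem_toFinset.mpr hx⟩
  set img := s.image (blockOf A) with himg
  have himg_ne : img.Nonempty := hs_ne.image _
  obtain ⟨p, hp_img, hp_max⟩ :=
    Finset.exists_max_image img (fun q => (q.2 : ℕ) - (q.1 : ℕ) + 1) himg_ne
  have himg_sub : img ⊆ t := by
    intro q hq
    rcases Finset.mem_image.mp hq with ⟨x, hx, rfl⟩
    exact hFfin.mem_toFinset.mpr (hcov x (hSfin.mem_toFinset.mp hx))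
  have hp_memF : p ∈ F := hFfin.mem_toFinset.mp (himg_sub hp_img)
  have hcard : s.card ≤ ((p.2 : ℕ) - (p.1 : ℕ) + 1) * img.card := by
    apply Finset.card_le_mul_card_image
    intro q hq
    have h1 : (s.filter fun x => blockOf A x = q).card ≤ (Finset.Icc q.1 q.2).card := by
      apply Finset.card_le_card
      intro x hx
      obtain ⟨hxs, hxe⟩ := Finset.mem_filter.mp hx
      have spec := blockOf_spec A x
      rw [hxe] at spec
      exact Finset.mem_Icc.mpr ⟨spec.2.1, spec.2.2.1⟩
    have h2 : (Finset.Icc q.1 q.2).card ≤ (q.2 : ℕ) - (q.1 : ℕ) + 1 := by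
      rw [Fin.card_Icc]; omega
    exact le_trans (le_trans h1 h2) (hp_max q hq)
  have hScard : S.ncard = s.card := Set.ncard_eq_toFinset_card S hSfin
  have hFcard : F.ncard = t.card := Set.ncard_eq_toFinset_card F hFfin
  refine ⟨p, hp_memF, ?_⟩
  calc S.ncard = s.card := hScard
    _ ≤ ((p.2 : ℕ) - (p.1 : ℕ) + 1) * img.card := hcard
    _ ≤ ((p.2 : ℕ) - (p.1 : ℕ) + 1) * t.card :=
        Nat.mul_le_mul_left _ (Finset.card_le_card himg_sub)
    _ = F.ncard * ((p.2 : ℕ) - (p.1 : ℕ) + 1) := by rw [hFcard, Nat.mul_comm]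

lemma gap_ncard {a b : Fin n} :
    {x : Fin n | (a : ℕ) < (x : ℕ) ∧ (x : ℕ) < (b : ℕ)}.ncard = (b : ℕ) - (a : ℕ) - 1 := by
  have h : {x : Fin n | (a : ℕ) < (x : ℕ) ∧ (x : ℕ) < (b : ℕ)} = ↑(Finset.Ioo a b) := by
    ext x
    simp only [Set.mem_setOf_eq, Finset.coe_Ioo, Set.mem_Ioo, Fin.lt_def]
  rw [h, Set.ncard_coe_finset, Fin.card_Ioo]

lemma descent {A : Set (Fin n)} {τ : ℝ} {m : ℕ} (hm : 1 ≤ m) (hτ : 0 < τ)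
    (hβ : 1 ≤ 2 * (m : ℝ) * τ)
    (hall : {p : Fin n × Fin n | IsBlock A p.1 p.2}.ncard ≤ m)
    (hfail : ∀ P Q : Fin n × Fin n, IsBlock A P.1 P.2 → IsBlock A Q.1 Q.2 →
      (P.2 : ℕ) < (Q.1 : ℕ) → ¬(P.1 ∈ A ↔ Q.1 ∈ A) →
      ((min ((P.2 : ℕ) - (P.1 : ℕ) + 1) ((Q.2 : ℕ) - (Q.1 : ℕ) + 1) : ℕ) : ℝ) <
        τ * (1 + (((Q.1 : ℕ) - (P.2 : ℕ) - 1 : ℕ) : ℝ))) :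
    ∀ b : ℕ, ∀ P Q : Fin n × Fin n, IsBlock A P.1 P.2 → IsBlock A Q.1 Q.2 →
      (P.2 : ℕ) < (Q.1 : ℕ) → ¬(P.1 ∈ A ↔ Q.1 ∈ A) →
      {p : Fin n × Fin n |
        IsBlock A p.1 p.2 ∧ (P.2 : ℕ) < (p.1 : ℕ) ∧ (p.2 : ℕ) < (Q.1 : ℕ)}.ncard ≤ b →
      ((min ((P.2 : ℕ) - (P.1 : ℕ) + 1) ((Q.2 : ℕ) - (Q.1 : ℕ) + 1) : ℕ) : ℝ) ≤
        (2 * (m : ℝ) * τ) ^ (b + 1) := by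
  have hβpos : (0 : ℝ) < 2 * (m : ℝ) * τ := lt_of_lt_of_le one_pos hβ
  have hτβ : τ ≤ 2 * (m : ℝ) * τ / 2 := by
    rw [le_div_iff₀ (by norm_num : (0:ℝ) < 2)]
    have : (1 : ℝ) ≤ (m : ℝ) := by exact_mod_cast hm
    nlinarith
  -- the case of an empty gap
  have hsmall : ∀ b : ℕ, ∀ P Q : Fin n × Fin n, IsBlock A P.1 P.2 → IsBlock A Q.1 Q.2 →
      (P.2 : ℕ) < (Q.1 : ℕ) → ¬(P.1 ∈ A ↔ Q.1 ∈ A) → (Q.1 : ℕ) - (P.2 : ℕ) - 1 = 0 →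
      ((min ((P.2 : ℕ) - (P.1 : ℕ) + 1) ((Q.2 : ℕ) - (Q.1 : ℕ) + 1) : ℕ) : ℝ) ≤
        (2 * (m : ℝ) * τ) ^ (b + 1) := by
    intro b P Q hP hQ hlt hop hzero
    have h1 := hfail P Q hP hQ hlt hop
    rw [hzero] at h1
    simp only [Nat.cast_zero, add_zero, mul_one] at h1
    have h2 : τ ≤ (2 * (m : ℝ) * τ) ^ (b + 1) := by
      calc τ ≤ 2 * (m : ℝ) * τ / 2 := hτβ
        _ ≤ 2 * (m : ℝ) * τ := by linarith
        _ ≤ (2 * (m : ℝ) * τ) ^ (b + 1) := le_self_pow₀ hβ (Nat.succ_ne_zero b)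
    linarith
  -- nonempty gap gives a block inside the gap
  have hgapblock : ∀ P Q : Fin n × Fin n, IsBlock A P.1 P.2 → IsBlock A Q.1 Q.2 →
      (P.2 : ℕ) < (Q.1 : ℕ) → (Q.1 : ℕ) - (P.2 : ℕ) - 1 ≠ 0 →
      {p : Fin n × Fin n |
        IsBlock A p.1 p.2 ∧ (P.2 : ℕ) < (p.1 : ℕ) ∧ (p.2 : ℕ) < (Q.1 : ℕ)}.Nonempty := by
    intro P Q hP hQ hlt hne
    have hwlt : (P.2 : ℕ) + 1 < n := lt_of_lt_of_le (by omega) (Q.1.isLt.le)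
    set w : Fin n := ⟨(P.2 : ℕ) + 1, hwlt⟩ with hw
    have h1 : (P.2 : ℕ) < (w : ℕ) := by simp [hw]
    have h2 : (w : ℕ) < (Q.1 : ℕ) := by simp [hw]; omega
    exact ⟨blockOf A w, blockOf_mem_gap hP hQ h1 h2⟩
  intro b
  induction b with
  | zero =>
    intro P Q hP hQ hlt hop hG
    by_cases hz : (Q.1 : ℕ) - (P.2 : ℕ) - 1 = 0
    · exact hsmall 0 P Q hP hQ hlt hop hz
    · exfalso
      have hne := hgapblock P Q hP hQ hlt hz
      have := Set.ncard_pos (Set.toFinite _) |>.mpr hne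
      omega
  | succ b ih =>
    intro P Q hP hQ hlt hop hG
    by_cases hz : (Q.1 : ℕ) - (P.2 : ℕ) - 1 = 0
    · exact hsmall (b + 1) P Q hP hQ hlt hop hz
    set G := {p : Fin n × Fin n |
      IsBlock A p.1 p.2 ∧ (P.2 : ℕ) < (p.1 : ℕ) ∧ (p.2 : ℕ) < (Q.1 : ℕ)} with hGdef
    set S := {x : Fin n | (P.2 : ℕ) < (x : ℕ) ∧ (x : ℕ) < (Q.1 : ℕ)} with hSdef
    have hSne : S.Nonempty := by
      have hwlt : (P.2 : ℕ) + 1 < n := lt_of_lt_of_le (by omega) (Q.1.isLt.le)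
      exact ⟨⟨(P.2 : ℕ) + 1, hwlt⟩, by constructor <;> simp <;> omega⟩
    have hcov : ∀ x ∈ S, blockOf A x ∈ G := by
      intro x hx
      exact blockOf_mem_gap hP hQ hx.1 hx.2
    obtain ⟨Z, hZG, hZcard⟩ := cover_card hSne hcov
    have hSl : S.ncard = (Q.1 : ℕ) - (P.2 : ℕ) - 1 := gap_ncard
    have hGm : G.ncard ≤ m := by
      refine le_trans (Set.ncard_le_ncard ?_ (Set.toFinite _)) hall
      exact fun p hp => hp.1
    have hellm : (Q.1 : ℕ) - (P.2 : ℕ) - 1 ≤ m * ((Z.2 : ℕ) - (Z.1 : ℕ) + 1) := by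
      rw [← hSl]
      exact le_trans hZcard (Nat.mul_le_mul_right _ hGm)
    obtain ⟨hZb, hZ1, hZ2⟩ := hZG
    have hZlh : (Z.1 : ℕ) ≤ (Z.2 : ℕ) := hZb.1
    have hGZ : (G \ {Z}).ncard ≤ b := by
      have h1 : Z ∈ G := ⟨hZb, hZ1, hZ2⟩
      have := Set.ncard_diff_singleton_of_mem h1
      omega
    -- key arithmetic step
    have key : ∀ z : ℕ, (Q.1 : ℕ) - (P.2 : ℕ) - 1 ≤ m * z →
        ((z : ℕ) : ℝ) ≤ (2 * (m : ℝ) * τ) ^ (b + 1) →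
        ((min ((P.2 : ℕ) - (P.1 : ℕ) + 1) ((Q.2 : ℕ) - (Q.1 : ℕ) + 1) : ℕ) : ℝ) ≤
          (2 * (m : ℝ) * τ) ^ (b + 1 + 1) := by
      intro z hz1 hz2
      have h1 := hfail P Q hP hQ hlt hop
      have hcast : (((Q.1 : ℕ) - (P.2 : ℕ) - 1 : ℕ) : ℝ) ≤ (m : ℝ) * (z : ℝ) := by
        exact_mod_cast hz1
      have hmpos : (0 : ℝ) < (m : ℝ) := by exact_mod_cast hm
      have hpow1 : (1 : ℝ) ≤ (2 * (m : ℝ) * τ) ^ (b + 1) := one_le_pow₀ hβ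
      have hchain : ((min ((P.2 : ℕ) - (P.1 : ℕ) + 1) ((Q.2 : ℕ) - (Q.1 : ℕ) + 1) : ℕ) : ℝ) <
          τ * (1 + (m : ℝ) * (z : ℝ)) := by
        refine lt_of_lt_of_le h1 ?_
        have : (1 : ℝ) + (((Q.1 : ℕ) - (P.2 : ℕ) - 1 : ℕ) : ℝ) ≤ 1 + (m : ℝ) * (z : ℝ) := by
          linarith
        exact mul_le_mul_of_nonneg_left this hτ.le
      have hfin : τ * (1 + (m : ℝ) * (z : ℝ)) ≤ (2 * (m : ℝ) * τ) ^ (b + 1 + 1) := by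
        have hzn : (0 : ℝ) ≤ (z : ℝ) := Nat.cast_nonneg z
        have e1 : τ * (1 + (m : ℝ) * (z : ℝ)) = τ + ((m : ℝ) * τ) * (z : ℝ) := by ring
        have e2 : ((m : ℝ) * τ) * (z : ℝ) ≤ ((m : ℝ) * τ) * (2 * (m : ℝ) * τ) ^ (b + 1) :=
          mul_le_mul_of_nonneg_left hz2 (by positivity)
        have e3 : τ ≤ ((m : ℝ) * τ) * (2 * (m : ℝ) * τ) ^ (b + 1) := by
          have h4 : τ ≤ (m : ℝ) * τ := by nlinarith
          nlinarith
        have e4 : (2 * (m : ℝ) * τ) ^ (b + 1 + 1) =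
            ((m : ℝ) * τ) * (2 * (m : ℝ) * τ) ^ (b + 1) +
            ((m : ℝ) * τ) * (2 * (m : ℝ) * τ) ^ (b + 1) := by
          rw [pow_succ]; ring
        linarith
      linarith
    by_cases hZP : (Z.1 ∈ A ↔ P.1 ∈ A)
    · -- Z has the color of P; pair (Z, Q)
      have hZQ : ¬(Z.1 ∈ A ↔ Q.1 ∈ A) := fun h => hop (hZP.symm.trans h)
      have hsub : {p : Fin n × Fin n |
          IsBlock A p.1 p.2 ∧ (Z.2 : ℕ) < (p.1 : ℕ) ∧ (p.2 : ℕ) < (Q.1 : ℕ)} ⊆ G \ {Z} := by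
        intro p hp
        obtain ⟨hpb, hp1, hp2⟩ := hp
        have hplh : (p.1 : ℕ) ≤ (p.2 : ℕ) := hpb.1
        refine ⟨⟨hpb, by omega, hp2⟩, ?_⟩
        intro hpZ
        rw [Set.mem_singleton_iff] at hpZ
        subst hpZ
        omega
      have hGb : {p : Fin n × Fin n |
          IsBlock A p.1 p.2 ∧ (Z.2 : ℕ) < (p.1 : ℕ) ∧ (p.2 : ℕ) < (Q.1 : ℕ)}.ncard ≤ b :=
        le_trans (Set.ncard_le_ncard hsub (Set.toFinite _)) hGZ
      have hIH := ih Z Q hZb hQ hZ2 hZQ hGb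
      rcases le_total ((Z.2 : ℕ) - (Z.1 : ℕ) + 1) ((Q.2 : ℕ) - (Q.1 : ℕ) + 1) with hle | hle
      · -- size Z is the min, so size Z is small
        rw [min_eq_left hle] at hIH
        exact key _ hellm hIH
      · -- size Q is small
        rw [min_eq_right hle] at hIH
        calc ((min ((P.2 : ℕ) - (P.1 : ℕ) + 1) ((Q.2 : ℕ) - (Q.1 : ℕ) + 1) : ℕ) : ℝ)
            ≤ (((Q.2 : ℕ) - (Q.1 : ℕ) + 1 : ℕ) : ℝ) := by exact_mod_cast min_le_right _ _
          _ ≤ (2 * (m : ℝ) * τ) ^ (b + 1) := hIH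
          _ ≤ (2 * (m : ℝ) * τ) ^ (b + 1 + 1) :=
              pow_le_pow_right₀ hβ (by omega)
    · -- Z has the color of Q; pair (P, Z)
      have hPZ : ¬(P.1 ∈ A ↔ Z.1 ∈ A) := fun h => hZP h.symm
      have hsub : {p : Fin n × Fin n |
          IsBlock A p.1 p.2 ∧ (P.2 : ℕ) < (p.1 : ℕ) ∧ (p.2 : ℕ) < (Z.1 : ℕ)} ⊆ G \ {Z} := by
        intro p hp
        obtain ⟨hpb, hp1, hp2⟩ := hp
        have hplh : (p.1 : ℕ) ≤ (p.2 : ℕ) := hpb.1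
        refine ⟨⟨hpb, hp1, by omega⟩, ?_⟩
        intro hpZ
        rw [Set.mem_singleton_iff] at hpZ
        subst hpZ
        omega
      have hGb : {p : Fin n × Fin n |
          IsBlock A p.1 p.2 ∧ (P.2 : ℕ) < (p.1 : ℕ) ∧ (p.2 : ℕ) < (Z.1 : ℕ)}.ncard ≤ b :=
        le_trans (Set.ncard_le_ncard hsub (Set.toFinite _)) hGZ
      have hIH := ih P Z hP hZb hZ1 hPZ hGb
      rcases le_total ((P.2 : ℕ) - (P.1 : ℕ) + 1) ((Z.2 : ℕ) - (Z.1 : ℕ) + 1) with hle | hle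
      · -- size P is small
        rw [min_eq_left hle] at hIH
        calc ((min ((P.2 : ℕ) - (P.1 : ℕ) + 1) ((Q.2 : ℕ) - (Q.1 : ℕ) + 1) : ℕ) : ℝ)
            ≤ (((P.2 : ℕ) - (P.1 : ℕ) + 1 : ℕ) : ℝ) := by exact_mod_cast min_le_left _ _
          _ ≤ (2 * (m : ℝ) * τ) ^ (b + 1) := hIH
          _ ≤ (2 * (m : ℝ) * τ) ^ (b + 1 + 1) :=
              pow_le_pow_right₀ hβ (by omega)
      · -- size Z is small
        rw [min_eq_right hle] at hIH
        exact key _ hellm hIH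

lemma const_lt_one {c : ℕ} (hc : 0 < c) :
    3 * (c : ℝ) * ((4 : ℝ) / 13) ^ (2 * c - 1) < 1 := by
  have hcR : (0 : ℝ) < (c : ℝ) := by exact_mod_cast hc
  have h1 : ((4 : ℝ) / 13) ^ (2 * c - 1) < ((1 : ℝ) / 3) ^ (2 * c - 1) := by
    apply pow_lt_pow_left₀ (by norm_num) (by norm_num) (by omega)
  have h3 : (c : ℕ) ≤ 9 ^ (c - 1) := by
    calc c ≤ 2 ^ (c - 1) := by
          have := Nat.lt_two_pow_self (n := c - 1)
          omega
      _ ≤ 9 ^ (c - 1) := Nat.pow_le_pow_left (by norm_num) _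
  have h4 : 3 * c ≤ 3 ^ (2 * c - 1) := by
    have he : 2 * c - 1 = 2 * (c - 1) + 1 := by omega
    rw [he, pow_succ, pow_mul]
    calc 3 * c ≤ 3 * 9 ^ (c - 1) := by
          have := h3; omega
      _ = (3 ^ 2) ^ (c - 1) * 3 := by norm_num [mul_comm]
  have h4R : 3 * (c : ℝ) ≤ (3 : ℝ) ^ (2 * c - 1) := by exact_mod_cast h4
  have h5 : 3 * (c : ℝ) * ((1 : ℝ) / 3) ^ (2 * c - 1) ≤ 1 := by
    have hp : (0 : ℝ) < (3 : ℝ) ^ (2 * c - 1) := by positivity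
    rw [div_pow, one_pow, mul_div_assoc', div_le_one hp]
    linarith
  calc 3 * (c : ℝ) * ((4 : ℝ) / 13) ^ (2 * c - 1)
      < 3 * (c : ℝ) * ((1 : ℝ) / 3) ^ (2 * c - 1) := by
        apply mul_lt_mul_of_pos_left h1 (by positivity)
    _ ≤ 1 := h5

lemma two_mul_sub_one_le_sq (c : ℕ) (hc : 0 < c) : 2 * c - 1 ≤ c ^ 2 := by
  rcases c with _ | n
  · omega
  · have h : (n + 1) ^ 2 = n * n + 2 * n + 1 := by ring
    omega

end Stmt4Aux

set_option maxHeartbeats 1000000 in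
/-- For every positive integer `c` there exist `α > 0` and `k₀`
such that for every `k > k₀` and every bipartition of `{0, …, 3^k − 1}` into sets
`A` and `B = Aᶜ` with `|A| ≥ 3^k/3` and `|B| ≥ 3^k/3`, in which at most `c` blocks
are contained in `A` and at most `c` blocks are contained in `B`, there exist a
block `R = [lo₁, hi₁]` contained in `A` and a block `B′ = [lo₂, hi₂]` contained in
`B` with `min (|R|, |B′|) ≥ α · 3^(k/c²) · (1 + ℓ)`, where `ℓ` is the number of
integers lying strictly between the two blocks. -/
theorem stmt_4 (c : ℕ) (hc : 0 < c) :
    ∃ α : ℝ, 0 < α ∧ ∃ k₀ : ℕ, ∀ k : ℕ, k₀ < k →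
      ∀ A B : Set (Fin (3 ^ k)), A ∪ B = Set.univ → A ∩ B = ∅ →
        (3 : ℝ) ^ k / 3 ≤ (A.ncard : ℝ) → (3 : ℝ) ^ k / 3 ≤ (B.ncard : ℝ) →
        {p : Fin (3 ^ k) × Fin (3 ^ k) | IsBlock A p.1 p.2 ∧ p.1 ∈ A}.ncard ≤ c →
        {p : Fin (3 ^ k) × Fin (3 ^ k) | IsBlock A p.1 p.2 ∧ p.1 ∈ B}.ncard ≤ c →
        ∃ lo₁ hi₁ lo₂ hi₂ : Fin (3 ^ k),
          IsBlock A lo₁ hi₁ ∧ lo₁ ∈ A ∧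
          IsBlock A lo₂ hi₂ ∧ lo₂ ∈ B ∧
          ∃ ℓ : ℕ,
            (((hi₁ : ℕ) < (lo₂ : ℕ) ∧ ℓ = (lo₂ : ℕ) - (hi₁ : ℕ) - 1) ∨
             ((hi₂ : ℕ) < (lo₁ : ℕ) ∧ ℓ = (lo₁ : ℕ) - (hi₂ : ℕ) - 1)) ∧
            α * (3 : ℝ) ^ ((k : ℝ) / (c : ℝ) ^ 2) * (1 + (ℓ : ℝ)) ≤
              (min ((hi₁ : ℕ) - (lo₁ : ℕ) + 1) ((hi₂ : ℕ) - (lo₂ : ℕ) + 1) : ℕ) := by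
  classical
  open Stmt4Aux in
  refine ⟨(13 * (c : ℝ))⁻¹, by positivity, 3 * c ^ 3, ?_⟩
  intro k hk A B hUnion hInter hA hB hcA hcB
  by_contra hcon
  set T : ℝ := (3 : ℝ) ^ ((k : ℝ) / (c : ℝ) ^ 2) with hT
  set τ : ℝ := (13 * (c : ℝ))⁻¹ * T with hτdef
  have hcR : (0 : ℝ) < (c : ℝ) := by exact_mod_cast hc
  have hTpos : 0 < T := Real.rpow_pos_of_pos (by norm_num) _
  have hτ : 0 < τ := by positivity
  have hAB : ∀ x : Fin (3 ^ k), x ∈ A ∨ x ∈ B := by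
    intro x
    have hx : x ∈ A ∪ B := by rw [hUnion]; trivial
    exact hx
  have hABdisj : ∀ x : Fin (3 ^ k), x ∈ A → x ∈ B → False := by
    intro x h1 h2
    have hx : x ∈ A ∩ B := ⟨h1, h2⟩
    rw [hInter] at hx
    exact hx
  -- T is large
  have hkc : c ^ 2 * 2 ≤ k := by
    have h1 : c ^ 2 ≤ c ^ 3 := Nat.pow_le_pow_right hc (by omega)
    omega
  have hT9 : (9 : ℝ) ≤ T := by
    have h1 : ((2 : ℕ) : ℝ) ≤ (k : ℝ) / (c : ℝ) ^ 2 := by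
      rw [le_div_iff₀ (by positivity)]
      calc ((2 : ℕ) : ℝ) * (c : ℝ) ^ 2 = ((c ^ 2 * 2 : ℕ) : ℝ) := by push_cast; ring
        _ ≤ (k : ℝ) := by exact_mod_cast hkc
    calc (9 : ℝ) = (3 : ℝ) ^ ((2 : ℕ) : ℝ) := by
          rw [Real.rpow_natCast]; norm_num
      _ ≤ T := Real.rpow_le_rpow_of_exponent_le (by norm_num) h1
  have hβeq : 2 * ((2 * c : ℕ) : ℝ) * τ = (4 / 13) * T := by
    rw [hτdef]
    push_cast
    field_simp
    ring
  have hβ : 1 ≤ 2 * ((2 * c : ℕ) : ℝ) * τ := by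
    rw [hβeq]; nlinarith
  -- at most 2c blocks in total
  have hall : {p : Fin (3 ^ k) × Fin (3 ^ k) | IsBlock A p.1 p.2}.ncard ≤ 2 * c := by
    have he : {p : Fin (3 ^ k) × Fin (3 ^ k) | IsBlock A p.1 p.2} =
        {p : Fin (3 ^ k) × Fin (3 ^ k) | IsBlock A p.1 p.2 ∧ p.1 ∈ A} ∪
        {p : Fin (3 ^ k) × Fin (3 ^ k) | IsBlock A p.1 p.2 ∧ p.1 ∈ B} := by
      ext p
      simp only [Set.mem_setOf_eq, Set.mem_union]
      constructor
      · intro h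
        rcases hAB p.1 with h2 | h2
        · exact Or.inl ⟨h, h2⟩
        · exact Or.inr ⟨h, h2⟩
      · rintro (⟨h, -⟩ | ⟨h, -⟩) <;> exact h
    rw [he]
    calc _ ≤ _ := Set.ncard_union_le _ _
      _ ≤ c + c := add_le_add hcA hcB
      _ = 2 * c := by omega
  -- the failure hypothesis
  have hfail : ∀ P Q : Fin (3 ^ k) × Fin (3 ^ k), IsBlock A P.1 P.2 → IsBlock A Q.1 Q.2 →
      (P.2 : ℕ) < (Q.1 : ℕ) → ¬(P.1 ∈ A ↔ Q.1 ∈ A) →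
      ((min ((P.2 : ℕ) - (P.1 : ℕ) + 1) ((Q.2 : ℕ) - (Q.1 : ℕ) + 1) : ℕ) : ℝ) <
        τ * (1 + (((Q.1 : ℕ) - (P.2 : ℕ) - 1 : ℕ) : ℝ)) := by
    intro P Q hP hQ hlt hop
    by_contra hnot
    push_neg at hnot
    apply hcon
    by_cases hPA : P.1 ∈ A
    · have hQB : Q.1 ∈ B := by
        rcases hAB Q.1 with h | h
        · exact absurd (⟨fun _ => h, fun _ => hPA⟩ : (P.1 ∈ A ↔ Q.1 ∈ A)) hop
        · exact h
      refine ⟨P.1, P.2, Q.1, Q.2, hP, hPA, hQ, hQB, (Q.1 : ℕ) - (P.2 : ℕ) - 1,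
        Or.inl ⟨hlt, rfl⟩, ?_⟩
      calc (13 * (c : ℝ))⁻¹ * T * (1 + (((Q.1 : ℕ) - (P.2 : ℕ) - 1 : ℕ) : ℝ))
          = τ * (1 + (((Q.1 : ℕ) - (P.2 : ℕ) - 1 : ℕ) : ℝ)) := by rw [hτdef]
        _ ≤ _ := hnot
    · have hPB : P.1 ∈ B := (hAB P.1).resolve_left hPA
      have hQA : Q.1 ∈ A := by
        rcases hAB Q.1 with h | h
        · exact h
        · have hQnA : Q.1 ∉ A := fun h2 => hABdisj Q.1 h2 h
          exact absurd (iff_of_false hPA hQnA) hop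
      refine ⟨Q.1, Q.2, P.1, P.2, hQ, hQA, hP, hPB, (Q.1 : ℕ) - (P.2 : ℕ) - 1,
        Or.inr ⟨hlt, rfl⟩, ?_⟩
      have hmc : (min ((Q.2 : ℕ) - (Q.1 : ℕ) + 1) ((P.2 : ℕ) - (P.1 : ℕ) + 1) : ℕ) =
          (min ((P.2 : ℕ) - (P.1 : ℕ) + 1) ((Q.2 : ℕ) - (Q.1 : ℕ) + 1) : ℕ) :=
        Nat.min_comm _ _
      calc (13 * (c : ℝ))⁻¹ * T * (1 + (((Q.1 : ℕ) - (P.2 : ℕ) - 1 : ℕ) : ℝ))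
          = τ * (1 + (((Q.1 : ℕ) - (P.2 : ℕ) - 1 : ℕ) : ℝ)) := by rw [hτdef]
        _ ≤ ((min ((P.2 : ℕ) - (P.1 : ℕ) + 1) ((Q.2 : ℕ) - (Q.1 : ℕ) + 1) : ℕ) : ℝ) := hnot
        _ = _ := by rw [hmc]
  -- biggest A-block and biggest B-block
  have h3kpos : (0 : ℝ) < (3 : ℝ) ^ k / 3 := by positivity
  have hAne : A.Nonempty := by
    apply Set.nonempty_of_ncard_ne_zero
    intro h
    rw [h] at hA
    simp only [Nat.cast_zero] at hA
    linarith
  have hBne : B.Nonempty := by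
    apply Set.nonempty_of_ncard_ne_zero
    intro h
    rw [h] at hB
    simp only [Nat.cast_zero] at hB
    linarith
  have hcovA : ∀ x ∈ A, blockOf A x ∈
      {p : Fin (3 ^ k) × Fin (3 ^ k) | IsBlock A p.1 p.2 ∧ p.1 ∈ A} :=
    fun x hx => ⟨(blockOf_spec A x).1, ((blockOf_spec A x).2.2.2).mpr hx⟩
  have hcovB : ∀ x ∈ B, blockOf A x ∈
      {p : Fin (3 ^ k) × Fin (3 ^ k) | IsBlock A p.1 p.2 ∧ p.1 ∈ B} := by
    intro x hx
    refine ⟨(blockOf_spec A x).1, ?_⟩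
    have hxnA : x ∉ A := fun h => hABdisj x h hx
    have hlnA : (blockOf A x).1 ∉ A := fun h => hxnA (((blockOf_spec A x).2.2.2).mp h)
    exact (hAB _).resolve_left hlnA
  obtain ⟨R, hRmem, hRcard⟩ := cover_card hAne hcovA
  obtain ⟨Bb, hBmem, hBcard⟩ := cover_card hBne hcovB
  have hRsize : (3 : ℝ) ^ k / 3 ≤ (c : ℝ) * (((R.2 : ℕ) - (R.1 : ℕ) + 1 : ℕ) : ℝ) := by
    have h1 : (A.ncard : ℝ) ≤
        (({p : Fin (3 ^ k) × Fin (3 ^ k) | IsBlock A p.1 p.2 ∧ p.1 ∈ A}.ncard : ℝ)) *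
          (((R.2 : ℕ) - (R.1 : ℕ) + 1 : ℕ) : ℝ) := by exact_mod_cast hRcard
    have h2 : (({p : Fin (3 ^ k) × Fin (3 ^ k) | IsBlock A p.1 p.2 ∧ p.1 ∈ A}.ncard : ℝ)) ≤
        (c : ℝ) := by exact_mod_cast hcA
    have h3 : (0 : ℝ) ≤ (((R.2 : ℕ) - (R.1 : ℕ) + 1 : ℕ) : ℝ) := Nat.cast_nonneg _
    nlinarith
  have hBsize : (3 : ℝ) ^ k / 3 ≤ (c : ℝ) * (((Bb.2 : ℕ) - (Bb.1 : ℕ) + 1 : ℕ) : ℝ) := by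
    have h1 : (B.ncard : ℝ) ≤
        (({p : Fin (3 ^ k) × Fin (3 ^ k) | IsBlock A p.1 p.2 ∧ p.1 ∈ B}.ncard : ℝ)) *
          (((Bb.2 : ℕ) - (Bb.1 : ℕ) + 1 : ℕ) : ℝ) := by exact_mod_cast hBcard
    have h2 : (({p : Fin (3 ^ k) × Fin (3 ^ k) | IsBlock A p.1 p.2 ∧ p.1 ∈ B}.ncard : ℝ)) ≤
        (c : ℝ) := by exact_mod_cast hcB
    have h3 : (0 : ℝ) ≤ (((Bb.2 : ℕ) - (Bb.1 : ℕ) + 1 : ℕ) : ℝ) := Nat.cast_nonneg _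
    nlinarith
  have hRA : R.1 ∈ A := hRmem.2
  have hBB : Bb.1 ∈ B := hBmem.2
  have hBnA : Bb.1 ∉ A := fun h => hABdisj _ h hBB
  have hop : ¬(R.1 ∈ A ↔ Bb.1 ∈ A) := fun h => hBnA (h.mp hRA)
  -- upper bound for the min, valid in both orientations
  have hup : (2 * ((2 * c : ℕ) : ℝ) * τ) ^ (2 * c - 2 + 1) < (3 : ℝ) ^ k / (3 * (c : ℝ)) := by
    have h0 : 2 * c - 2 + 1 = 2 * c - 1 := by omega
    have hTpow : T ^ (2 * c - 1) ≤ (3 : ℝ) ^ k := by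
      have he1 : T ^ (2 * c - 1) =
          (3 : ℝ) ^ ((k : ℝ) / (c : ℝ) ^ 2 * ((2 * c - 1 : ℕ) : ℝ)) := by
        rw [hT, ← Real.rpow_natCast ((3 : ℝ) ^ ((k : ℝ) / (c : ℝ) ^ 2)) (2 * c - 1),
          ← Real.rpow_mul (by norm_num : (0 : ℝ) ≤ 3)]
      rw [he1]
      have hexp : (k : ℝ) / (c : ℝ) ^ 2 * ((2 * c - 1 : ℕ) : ℝ) ≤ (k : ℝ) := by
        have hcc : (2 * c - 1 : ℕ) ≤ c ^ 2 := Stmt4Aux.two_mul_sub_one_le_sq c hc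
        have h7 : ((2 * c - 1 : ℕ) : ℝ) ≤ (c : ℝ) ^ 2 := by exact_mod_cast hcc
        rw [div_mul_eq_mul_div, div_le_iff₀ (by positivity)]
        have h8 : (0 : ℝ) ≤ (k : ℝ) := Nat.cast_nonneg _
        exact mul_le_mul_of_nonneg_left h7 h8
      calc (3 : ℝ) ^ ((k : ℝ) / (c : ℝ) ^ 2 * ((2 * c - 1 : ℕ) : ℝ))
          ≤ (3 : ℝ) ^ ((k : ℝ)) := Real.rpow_le_rpow_of_exponent_le (by norm_num) hexp
        _ = (3 : ℝ) ^ k := Real.rpow_natCast 3 k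
    have hconst := const_lt_one hc
    rw [hβeq, mul_pow, h0]
    calc ((4 : ℝ) / 13) ^ (2 * c - 1) * T ^ (2 * c - 1)
        ≤ ((4 : ℝ) / 13) ^ (2 * c - 1) * (3 : ℝ) ^ k :=
          mul_le_mul_of_nonneg_left hTpow (by positivity)
      _ < (3 : ℝ) ^ k / (3 * (c : ℝ)) := by
          rw [lt_div_iff₀ (by positivity)]
          calc ((4 : ℝ) / 13) ^ (2 * c - 1) * (3 : ℝ) ^ k * (3 * (c : ℝ))
              = (3 * (c : ℝ) * ((4 : ℝ) / 13) ^ (2 * c - 1)) * (3 : ℝ) ^ k := by ring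
            _ < 1 * (3 : ℝ) ^ k := by
                apply mul_lt_mul_of_pos_right hconst (by positivity)
            _ = (3 : ℝ) ^ k := one_mul _
  have hRlow : (3 : ℝ) ^ k / (3 * (c : ℝ)) ≤ (((R.2 : ℕ) - (R.1 : ℕ) + 1 : ℕ) : ℝ) := by
    rw [div_le_iff₀ (by positivity)] at hRsize ⊢
    nlinarith
  have hBlow : (3 : ℝ) ^ k / (3 * (c : ℝ)) ≤ (((Bb.2 : ℕ) - (Bb.1 : ℕ) + 1 : ℕ) : ℝ) := by
    rw [div_le_iff₀ (by positivity)] at hBsize ⊢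
    nlinarith
  rcases blocks_disjoint hRmem.1 hBmem.1 hop with hord | hord
  · -- R is to the left of Bb
    have hGc : {p : Fin (3 ^ k) × Fin (3 ^ k) |
        IsBlock A p.1 p.2 ∧ (R.2 : ℕ) < (p.1 : ℕ) ∧ (p.2 : ℕ) < (Bb.1 : ℕ)}.ncard ≤
        2 * c - 2 := by
      have hsub : {p : Fin (3 ^ k) × Fin (3 ^ k) |
          IsBlock A p.1 p.2 ∧ (R.2 : ℕ) < (p.1 : ℕ) ∧ (p.2 : ℕ) < (Bb.1 : ℕ)} ⊆
          ({p : Fin (3 ^ k) × Fin (3 ^ k) | IsBlock A p.1 p.2 ∧ p.1 ∈ A} \ {R}) ∪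
          ({p : Fin (3 ^ k) × Fin (3 ^ k) | IsBlock A p.1 p.2 ∧ p.1 ∈ B} \ {Bb}) := by
        intro p hp
        obtain ⟨hpb, hp1, hp2⟩ := hp
        have hplh : (p.1 : ℕ) ≤ (p.2 : ℕ) := hpb.1
        have hRlh : (R.1 : ℕ) ≤ (R.2 : ℕ) := hRmem.1.1
        have hBlh : (Bb.1 : ℕ) ≤ (Bb.2 : ℕ) := hBmem.1.1
        have hpneR : p ≠ R := by intro h; subst h; omega
        have hpneB : p ≠ Bb := by intro h; subst h; omega
        rcases hAB p.1 with h | h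
        · exact Or.inl ⟨⟨hpb, h⟩, hpneR⟩
        · exact Or.inr ⟨⟨hpb, h⟩, hpneB⟩
      refine le_trans (Set.ncard_le_ncard hsub (Set.toFinite _)) ?_
      have h1 := Set.ncard_diff_singleton_of_mem hRmem
      have h2 := Set.ncard_diff_singleton_of_mem hBmem
      calc _ ≤ _ := Set.ncard_union_le _ _
        _ ≤ 2 * c - 2 := by omega
    have hdes := descent (m := 2 * c) (by omega) hτ hβ hall hfail (2 * c - 2)
      R Bb hRmem.1 hBmem.1 hord hop hGc
    have hminlow : (3 : ℝ) ^ k / (3 * (c : ℝ)) ≤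
        ((min ((R.2 : ℕ) - (R.1 : ℕ) + 1) ((Bb.2 : ℕ) - (Bb.1 : ℕ) + 1) : ℕ) : ℝ) := by
      rw [Nat.cast_min]
      exact le_min hRlow hBlow
    have := lt_of_le_of_lt (le_trans hminlow hdes) hup
    exact lt_irrefl _ this
  · -- Bb is to the left of R
    have hop' : ¬(Bb.1 ∈ A ↔ R.1 ∈ A) := fun h => hop h.symm
    have hGc : {p : Fin (3 ^ k) × Fin (3 ^ k) |
        IsBlock A p.1 p.2 ∧ (Bb.2 : ℕ) < (p.1 : ℕ) ∧ (p.2 : ℕ) < (R.1 : ℕ)}.ncard ≤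
        2 * c - 2 := by
      have hsub : {p : Fin (3 ^ k) × Fin (3 ^ k) |
          IsBlock A p.1 p.2 ∧ (Bb.2 : ℕ) < (p.1 : ℕ) ∧ (p.2 : ℕ) < (R.1 : ℕ)} ⊆
          ({p : Fin (3 ^ k) × Fin (3 ^ k) | IsBlock A p.1 p.2 ∧ p.1 ∈ A} \ {R}) ∪
          ({p : Fin (3 ^ k) × Fin (3 ^ k) | IsBlock A p.1 p.2 ∧ p.1 ∈ B} \ {Bb}) := by
        intro p hp
        obtain ⟨hpb, hp1, hp2⟩ := hp
        have hplh : (p.1 : ℕ) ≤ (p.2 : ℕ) := hpb.1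
        have hRlh : (R.1 : ℕ) ≤ (R.2 : ℕ) := hRmem.1.1
        have hBlh : (Bb.1 : ℕ) ≤ (Bb.2 : ℕ) := hBmem.1.1
        have hpneR : p ≠ R := by intro h; subst h; omega
        have hpneB : p ≠ Bb := by intro h; subst h; omega
        rcases hAB p.1 with h | h
        · exact Or.inl ⟨⟨hpb, h⟩, hpneR⟩
        · exact Or.inr ⟨⟨hpb, h⟩, hpneB⟩
      refine le_trans (Set.ncard_le_ncard hsub (Set.toFinite _)) ?_
      have h1 := Set.ncard_diff_singleton_of_mem hRmem
      have h2 := Set.ncard_diff_singleton_of_mem hBmem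
      calc _ ≤ _ := Set.ncard_union_le _ _
        _ ≤ 2 * c - 2 := by omega
    have hdes := descent (m := 2 * c) (by omega) hτ hβ hall hfail (2 * c - 2)
      Bb R hBmem.1 hRmem.1 hord hop' hGc
    have hminlow : (3 : ℝ) ^ k / (3 * (c : ℝ)) ≤
        ((min ((Bb.2 : ℕ) - (Bb.1 : ℕ) + 1) ((R.2 : ℕ) - (R.1 : ℕ) + 1) : ℕ) : ℝ) := by
      rw [Nat.cast_min]
      exact le_min hBlow hRlow
    have := lt_of_le_of_lt (le_trans hminlow hdes) hup
    exact lt_irrefl _ this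
end

section
/- Let k ≥ 1. For every level 0 ≤ i ≤ k−1 and every j with 0 ≤ j < (3^{k−i} + 1)/2, the set S(i,j) has exactly 2^i elements, its minimum element is 2·3^i·j, and its maximum element is 2·3^i·j + 3^i − 1. Consequently, for every j with 0 ≤ j < (3^{k−i} + 1)/2 − 1, exactly 3^i vertices lie strictly between max S(i,j) and min S(i,j+1), i.e., min S(i,j+1) − max S(i,j) = 3^i + 1. -/
lemma Sset_bounds (i : ℕ) : ∀ j : ℕ, ∀ a ∈ Sset i j,
    2 * 3 ^ i * j ≤ a ∧ a ≤ 2 * 3 ^ i * j + 3 ^ i - 1 := by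
  induction i with
  | zero => intro j a ha; simp [Sset] at ha; omega
  | succ i ih =>
    intro m a ha
    have hp : 0 < 3 ^ i := pow_pos (by norm_num) i
    have h3 : (3 : ℕ) ^ (i + 1) = 3 * 3 ^ i := pow_succ' 3 i
    have h2 : 2 * 3 ^ (i + 1) * m = 2 * 3 ^ i * (3 * m) := by rw [h3]; ring
    rw [Sset, Finset.mem_union] at ha
    rcases ha with ha | ha
    · have := ih (3 * m) a ha; omega
    · have := ih (3 * m + 1) a ha
      have : 2 * 3 ^ i * (3 * m + 1) = 2 * 3 ^ i * (3 * m) + 2 * 3 ^ i := by ring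
      omega

lemma Sset_lo_mem (i : ℕ) : ∀ j : ℕ, 2 * 3 ^ i * j ∈ Sset i j := by
  induction i with
  | zero => intro j; simp [Sset]
  | succ i ih =>
    intro m
    have h2 : 2 * 3 ^ (i + 1) * m = 2 * 3 ^ i * (3 * m) := by
      rw [pow_succ' 3 i]; ring
    rw [Sset, Finset.mem_union, h2]
    exact Or.inl (ih (3 * m))

lemma Sset_hi_mem (i : ℕ) : ∀ j : ℕ, 2 * 3 ^ i * j + 3 ^ i - 1 ∈ Sset i j := by
  induction i with
  | zero => intro j; simp [Sset]
  | succ i ih =>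
    intro m
    have hp : 0 < 3 ^ i := pow_pos (by norm_num) i
    have h2 : 2 * 3 ^ (i + 1) * m + 3 ^ (i + 1) - 1
        = 2 * 3 ^ i * (3 * m + 1) + 3 ^ i - 1 := by
      rw [pow_succ' 3 i]
      have : 2 * (3 * 3 ^ i) * m + 3 * 3 ^ i = 2 * 3 ^ i * (3 * m + 1) + 3 ^ i := by ring
      omega
    rw [Sset, Finset.mem_union, h2]
    exact Or.inr (ih (3 * m + 1))

lemma Sset_card (i : ℕ) : ∀ j : ℕ, (Sset i j).card = 2 ^ i := by
  induction i with
  | zero => intro j; simp [Sset]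
  | succ i ih =>
    intro m
    have hp : 0 < 3 ^ i := pow_pos (by norm_num) i
    have hdisj : Disjoint (Sset i (3 * m)) (Sset i (3 * m + 1)) := by
      rw [Finset.disjoint_left]
      intro a ha1 ha2
      have b1 := Sset_bounds i (3 * m) a ha1
      have b2 := Sset_bounds i (3 * m + 1) a ha2
      have : 2 * 3 ^ i * (3 * m + 1) = 2 * 3 ^ i * (3 * m) + 2 * 3 ^ i := by ring
      omega
    rw [Sset, Finset.card_union_of_disjoint hdisj, ih, ih]
    ring

lemma Sset_nonempty (i j : ℕ) : (Sset i j).Nonempty :=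
  ⟨_, Sset_lo_mem i j⟩

lemma Sset_min' (i j : ℕ) :
    (Sset i j).min' (Sset_nonempty i j) = 2 * 3 ^ i * j :=
  le_antisymm (Finset.min'_le _ _ (Sset_lo_mem i j))
    (Finset.le_min' _ _ _ (fun y hy => (Sset_bounds i j y hy).1))

lemma Sset_max' (i j : ℕ) :
    (Sset i j).max' (Sset_nonempty i j) = 2 * 3 ^ i * j + 3 ^ i - 1 :=
  le_antisymm (Finset.max'_le _ _ _ (fun y hy => (Sset_bounds i j y hy).2))
    (Finset.le_max' _ _ (Sset_hi_mem i j))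

/-- Let `k ≥ 1`.  For every level `0 ≤ i ≤ k−1` and every `j` with
`0 ≤ j < (3^(k−i) + 1)/2`, the set `S(i,j)` has exactly `2^i` elements, its minimum
element is `2·3^i·j` and its maximum element is `2·3^i·j + 3^i − 1`.  Consequently,
for every `j` with `0 ≤ j < (3^(k−i) + 1)/2 − 1`, the minimum of `S(i,j+1)` exceeds
the maximum of `S(i,j)` by exactly `3^i + 1` (so exactly `3^i` vertices lie strictly
between them). -/
theorem stmt_5 (k : ℕ) (hk : 1 ≤ k) (i : ℕ) (hi : i ≤ k - 1) :
    (∀ j : ℕ, j < (3 ^ (k - i) + 1) / 2 →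
      (Sset i j).card = 2 ^ i ∧
      (Sset i j).min = ((2 * 3 ^ i * j : ℕ) : WithBot ℕ) ∧
      (Sset i j).max = ((2 * 3 ^ i * j + 3 ^ i - 1 : ℕ) : WithBot ℕ)) ∧
    (∀ j : ℕ, j + 1 < (3 ^ (k - i) + 1) / 2 →
      ∃ (h₁ : (Sset i j).Nonempty) (h₂ : (Sset i (j + 1)).Nonempty),
        (Sset i (j + 1)).min' h₂ - (Sset i j).max' h₁ = 3 ^ i + 1) := by
  constructor
  · intro j _
    refine ⟨Sset_card i j, ?_, ?_⟩
    · rw [Nat.cast_withBot, ← Finset.coe_min' (Sset_nonempty i j), Sset_min' i j]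
      rfl
    · rw [Nat.cast_withBot, ← Finset.coe_max' (Sset_nonempty i j), Sset_max' i j]
  · intro j _
    refine ⟨Sset_nonempty i j, Sset_nonempty i (j + 1), ?_⟩
    rw [Sset_min' i (j + 1), Sset_max' i j]
    have hp : 0 < 3 ^ i := pow_pos (by norm_num) i
    have : 2 * 3 ^ i * (j + 1) = 2 * 3 ^ i * j + 2 * 3 ^ i := by ring
    omega
end

section
/- Let k ≥ 1 and let u < v be vertices of G_k. Then there is at most one pair (i, j), with 0 ≤ i ≤ k−1 and 0 ≤ j < (3^{k−i} + 1)/2 − 1, such that u ∈ S(i,j) and v ∈ S(i,j+1). (This is the combinatorial content of the statement that the recursively constructed drawing of G_k is a strict confluent drawing: no adjacency is realized by more than one smooth curve.) -/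
/-- Auxiliary digit sets: numbers `< 3^i` with base-3 digits in `{0,1}`. -/
def Tset : ℕ → Finset ℕ
  | 0 => {0}
  | i + 1 => Tset i ∪ (Tset i).image (fun t => 3 ^ i + t)

lemma Tset_bound : ∀ i, ∀ t ∈ Tset i, 2 * t + 1 ≤ 3 ^ i := by
  intro i
  induction i with
  | zero => intro t ht; simp [Tset] at ht; omega
  | succ n ih =>
    intro t ht
    simp only [Tset, Finset.mem_union, Finset.mem_image] at ht
    rcases ht with h | ⟨s, hs, rfl⟩
    · have := ih t h
      have h3 : 3 ^ n ≤ 3 ^ (n + 1) := Nat.pow_le_pow_right (by norm_num) (by omega)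
      omega
    · have := ih s hs
      have h3 : 3 ^ (n + 1) = 3 * 3 ^ n := by ring
      omega

lemma Tset_mono {i : ℕ} : Tset i ⊆ Tset (i + 1) := by
  simp only [Tset]; exact Finset.subset_union_left

lemma Tset_div3 : ∀ i, ∀ t ∈ Tset (i + 1), t / 3 ∈ Tset i := by
  intro i
  induction i with
  | zero =>
    intro t ht
    simp only [Tset, Finset.mem_union, Finset.mem_image, Finset.mem_singleton] at ht ⊢
    rcases ht with rfl | ⟨s, rfl, rfl⟩ <;> simp
  | succ n ih =>
    intro t ht
    have ht' : t ∈ Tset (n + 1) ∪ (Tset (n + 1)).image (fun t => 3 ^ (n + 1) + t) := ht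
    rw [Finset.mem_union, Finset.mem_image] at ht'
    have goal' : t / 3 ∈ Tset n ∪ (Tset n).image (fun t => 3 ^ n + t) → t / 3 ∈ Tset (n + 1) :=
      fun h => h
    apply goal'
    rw [Finset.mem_union, Finset.mem_image]
    rcases ht' with h | ⟨s, hs, rfl⟩
    · exact Or.inl (ih t h)
    · refine Or.inr ⟨s / 3, ih s hs, ?_⟩
      have h3 : 3 ^ (n + 1) = 3 * 3 ^ n := by ring
      rw [h3, Nat.mul_add_div (by norm_num)]

lemma Tset_div_pow : ∀ i i' t, i ≤ i' → t ∈ Tset i' → t / 3 ^ i ∈ Tset (i' - i) := by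
  intro i
  induction i with
  | zero => intro i' t _ ht; simpa using ht
  | succ n ih =>
    intro i' t h ht
    obtain ⟨m, rfl⟩ : ∃ m, i' = m + 1 := ⟨i' - 1, by omega⟩
    have h1 : t / 3 ∈ Tset m := Tset_div3 m t ht
    have h2 : (t / 3) / 3 ^ n ∈ Tset (m - n) := ih m (t / 3) (by omega) h1
    have h3 : t / 3 ^ (n + 1) = (t / 3) / 3 ^ n := by
      rw [Nat.div_div_eq_div_mul, pow_succ, mul_comm]
    rw [h3]
    have : m + 1 - (n + 1) = m - n := by omega
    rw [this]; exact h2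

lemma Sset_mem : ∀ i j x, x ∈ Sset i j ↔ ∃ t ∈ Tset i, x = 2 * (3 ^ i * j + t) := by
  intro i
  induction i with
  | zero => intro j x; simp [Sset, Tset]
  | succ n ih =>
    intro j x
    simp only [Sset, Finset.mem_union, ih]
    constructor
    · rintro (⟨t, ht, rfl⟩ | ⟨t, ht, rfl⟩)
      · exact ⟨t, Tset_mono ht, by ring_nf⟩
      · refine ⟨3 ^ n + t, ?_, by ring_nf⟩
        simp only [Tset, Finset.mem_union, Finset.mem_image]
        exact Or.inr ⟨t, ht, rfl⟩
    · rintro ⟨t, ht, rfl⟩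
      simp only [Tset, Finset.mem_union, Finset.mem_image] at ht
      rcases ht with h | ⟨s, hs, rfl⟩
      · exact Or.inl ⟨t, h, by ring_nf⟩
      · exact Or.inr ⟨s, hs, by ring_nf⟩

lemma key_lemma (i i' j j' s t s' t' : ℕ) (hii' : i ≤ i')
    (hs : s ∈ Tset i) (ht : t ∈ Tset i) (hs' : s' ∈ Tset i') (ht' : t' ∈ Tset i')
    (ha : 3 ^ i * j + s = 3 ^ i' * j' + s')
    (hb : 3 ^ i * (j + 1) + t = 3 ^ i' * (j' + 1) + t') : i = i' ∧ j = j' := by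
  have hpow : (0:ℕ) < 3 ^ i := Nat.pow_pos (by norm_num)
  have hsb := Tset_bound i s hs
  have htb := Tset_bound i t ht
  set n := i' - i with hn
  have hsplit : 3 ^ i' = 3 ^ i * 3 ^ n := by rw [hn, ← pow_add]; congr 1; omega
  -- divide ha by 3^i
  have ha' : j = 3 ^ n * j' + s' / 3 ^ i := by
    have e1 : (3 ^ i * j + s) / 3 ^ i = j := by
      rw [Nat.mul_add_div hpow, Nat.div_eq_of_lt (by omega)]; omega
    have e2 : (3 ^ i' * j' + s') / 3 ^ i = 3 ^ n * j' + s' / 3 ^ i := by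
      have hform : 3 ^ i' * j' + s' = 3 ^ i * (3 ^ n * j') + s' := by rw [hsplit]; ring
      rw [hform, Nat.mul_add_div hpow]
    rw [← e1, ha, e2]
  have hb' : j + 1 = 3 ^ n * (j' + 1) + t' / 3 ^ i := by
    have e1 : (3 ^ i * (j + 1) + t) / 3 ^ i = j + 1 := by
      rw [Nat.mul_add_div hpow, Nat.div_eq_of_lt (by omega)]
    have e2 : (3 ^ i' * (j' + 1) + t') / 3 ^ i = 3 ^ n * (j' + 1) + t' / 3 ^ i := by
      have hform : 3 ^ i' * (j' + 1) + t' = 3 ^ i * (3 ^ n * (j' + 1)) + t' := by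
        rw [hsplit]; ring
      rw [hform, Nat.mul_add_div hpow]
    rw [← e1, hb, e2]
  -- the quotient s'/3^i lies in Tset n, so is small
  have hSdiv : s' / 3 ^ i ∈ Tset n := Tset_div_pow i i' s' hii' hs'
  have hSbound := Tset_bound n (s' / 3 ^ i) hSdiv
  -- deduce n = 0
  have hn0 : n = 0 := by
    by_contra hne
    have h3 : 3 ≤ 3 ^ n := by
      calc 3 = 3 ^ 1 := by norm_num
      _ ≤ 3 ^ n := Nat.pow_le_pow_right (by norm_num) (by omega)
    have hexp : 3 ^ n * (j' + 1) = 3 ^ n * j' + 3 ^ n := by ring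
    rw [hexp] at hb'
    have hkey : s' / 3 ^ i + 1 = 3 ^ n + t' / 3 ^ i := by omega
    have h4 : 3 ^ n ≤ s' / 3 ^ i + 1 := hkey ▸ Nat.le_add_right _ _
    omega
  have hieq : i = i' := by omega
  refine ⟨hieq, ?_⟩
  have hsb' := Tset_bound i' s' hs'
  rw [hn0] at ha'
  have : s' / 3 ^ i = 0 := Nat.div_eq_of_lt (by rw [hieq]; omega)
  omega

/-- Let `k ≥ 1` and let `u < v` be vertices of `G_k` (i.e.
`u < v < 3^k`).  Then there is at most one pair `(i, j)` with `0 ≤ i ≤ k−1` and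
`0 ≤ j < (3^(k−i) + 1)/2 − 1` such that `u ∈ S(i,j)` and `v ∈ S(i,j+1)`. -/
theorem stmt_7 (k : ℕ) (hk : 1 ≤ k) (u v : ℕ) (huv : u < v) (hv : v < 3 ^ k) :
    ∀ i j i' j' : ℕ,
      i ≤ k - 1 → j + 1 < (3 ^ (k - i) + 1) / 2 →
      i' ≤ k - 1 → j' + 1 < (3 ^ (k - i') + 1) / 2 →
      u ∈ Sset i j → v ∈ Sset i (j + 1) →
      u ∈ Sset i' j' → v ∈ Sset i' (j' + 1) →
      i = i' ∧ j = j' := by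
  intro i j i' j' _ _ _ _ hu1 hv1 hu2 hv2
  rw [Sset_mem] at hu1 hv1 hu2 hv2
  obtain ⟨s, hs, hus⟩ := hu1
  obtain ⟨t, ht, hvt⟩ := hv1
  obtain ⟨s', hs', hus'⟩ := hu2
  obtain ⟨t', ht', hvt'⟩ := hv2
  have ha : 3 ^ i * j + s = 3 ^ i' * j' + s' := by omega
  have hb : 3 ^ i * (j + 1) + t = 3 ^ i' * (j' + 1) + t' := by omega
  rcases le_or_gt i i' with h | h
  · exact key_lemma i i' j j' s t s' t' h hs ht hs' ht' ha hb
  · obtain ⟨h1, h2⟩ := key_lemma i' i j' j s' t' s t (le_of_lt h) hs' ht' hs ht ha.symm hb.symm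
    exact ⟨h1.symm, h2.symm⟩
end
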